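/- arXiv:2212.13440 — 8 statements merged into one kernel-verified Lean document; each statement's English description precedes it below -/
import Mathlib

section
/- Let S ∈ ℝ^{n×n} be symmetric, let c ≤ 0 be a real number, and let k, ℓ be integers with 1 ≤ k ≤ ℓ ≤ n. If tr(VᵀSV) ≤ c for every k-frame V ∈ ℝ^{n×k}, then tr(WᵀSW) ≤ c for every ℓ-frame W ∈ ℝ^{n×ℓ}. (This is the content of the paper's Proposition that the sufficient conditions for k-contraction imply the corresponding conditions for ℓ-contraction for all ℓ > k: if the sum of the k largest eigenvalues of S is ≤ c ≤ 0, then so is the sum of the ℓ largest eigenvalues.) -/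
open Matrix

/-- A `k`-frame in `ℝⁿ`: a matrix `V ∈ ℝ^{n×k}` with `VᵀV = I_k`. -/
def IsFrame {n k : ℕ} (V : Matrix (Fin n) (Fin k) ℝ) : Prop := Vᵀ * V = 1

lemma count_subsets_containing {ℓ k : ℕ} (hk : 1 ≤ k) (j : Fin ℓ) :
    ((Finset.powersetCard k (Finset.univ : Finset (Fin ℓ))).filter (fun s => j ∈ s)).card
      = (ℓ - 1).choose (k - 1) := by
  have : ((Finset.powersetCard k (Finset.univ : Finset (Fin ℓ))).filter (fun s => j ∈ s)).card
      = (Finset.powersetCard (k-1) (Finset.univ.erase j)).card := by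
    apply Finset.card_bij (fun s _ => s.erase j)
    · intro s hs
      simp only [Finset.mem_filter, Finset.mem_powersetCard] at hs
      simp only [Finset.mem_powersetCard]
      constructor
      · exact fun x hx => Finset.mem_erase.2 ⟨(Finset.mem_erase.1 hx).1, Finset.mem_univ x⟩
      · rw [Finset.card_erase_of_mem hs.2, hs.1.2]
    · intro s hs t ht hst
      simp only [Finset.mem_filter] at hs ht
      rw [← Finset.insert_erase hs.2, ← Finset.insert_erase ht.2, hst]
    · intro s hs
      simp only [Finset.mem_powersetCard] at hs
      refine ⟨insert j s, ?_, ?_⟩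
      · simp only [Finset.mem_filter, Finset.mem_powersetCard]
        have hj : j ∉ s := fun hjs => (Finset.mem_erase.1 (hs.1 hjs)).1 rfl
        refine ⟨⟨Finset.subset_univ _, ?_⟩, Finset.mem_insert_self _ _⟩
        rw [Finset.card_insert_of_notMem hj, hs.2]
        omega
      · have hj : j ∉ s := fun hjs => (Finset.mem_erase.1 (hs.1 hjs)).1 rfl
        rw [Finset.erase_insert hj]
  rw [this, Finset.card_powersetCard, Finset.card_erase_of_mem (Finset.mem_univ j),
    Finset.card_univ, Fintype.card_fin]

/-- **Proposition of the paper.** If `S ∈ ℝ^{n×n}` is symmetric, `c ≤ 0`, and the sum of the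
`k` largest eigenvalues of `S` is at most `c` (expressed via the Ky Fan maximum principle:
`tr(VᵀSV) ≤ c` for every `k`-frame `V`), then for any `ℓ` with `k ≤ ℓ ≤ n` the sum of the
`ℓ` largest eigenvalues of `S` is also at most `c`. -/
theorem kfan_mono {n k ℓ : ℕ} (S : Matrix (Fin n) (Fin n) ℝ) (hS : Sᵀ = S)
    (c : ℝ) (hc : c ≤ 0) (hk : 1 ≤ k) (hkl : k ≤ ℓ) (hln : ℓ ≤ n)
    (h : ∀ V : Matrix (Fin n) (Fin k) ℝ, IsFrame V → (Vᵀ * S * V).trace ≤ c) :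
    ∀ W : Matrix (Fin n) (Fin ℓ) ℝ, IsFrame W → (Wᵀ * S * W).trace ≤ c := by
  intro W hW
  set M := Wᵀ * S * W with hM
  -- for each k-subset s of Fin ℓ, the corresponding columns give a k-frame
  have key : ∀ (s : Finset (Fin ℓ)) (hcard : s.card = k),
      ∑ i : Fin k, M (s.orderEmbOfFin hcard i) (s.orderEmbOfFin hcard i) ≤ c := by
    intro s hcard
    set e : Fin k ↪o Fin ℓ := s.orderEmbOfFin hcard
    have hV : IsFrame (W.submatrix id e) := by
      unfold IsFrame
      rw [transpose_submatrix, ← submatrix_mul Wᵀ W e id e Function.bijective_id, hW,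
        submatrix_one _ e.injective]
    have := h (W.submatrix id e) hV
    have heq : ((W.submatrix id e)ᵀ * S * W.submatrix id e).trace
        = ∑ i : Fin k, M (e i) (e i) := by
      rw [transpose_submatrix]
      have : (Wᵀ.submatrix e id * S) * W.submatrix id e = M.submatrix e e := by
        rw [Matrix.mul_assoc, hM, Matrix.mul_assoc]
        ext i j
        simp [Matrix.mul_apply, Matrix.submatrix_apply]
      rw [Matrix.mul_assoc, ← Matrix.mul_assoc, this, Matrix.trace]
      simp [Matrix.diag]
    rw [heq] at this
    exact this
  -- sum over all k-subsets
  have hsum : ∑ s ∈ Finset.powersetCard k (Finset.univ : Finset (Fin ℓ)),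
      (∑ j ∈ s, M j j) ≤ (ℓ.choose k : ℝ) * c := by
    calc ∑ s ∈ Finset.powersetCard k (Finset.univ : Finset (Fin ℓ)), (∑ j ∈ s, M j j)
        ≤ ∑ _s ∈ Finset.powersetCard k (Finset.univ : Finset (Fin ℓ)), c := by
          apply Finset.sum_le_sum
          intro s hs
          have hcard := (Finset.mem_powersetCard.1 hs).2
          have := key s hcard
          set e : Fin k ↪o Fin ℓ := s.orderEmbOfFin hcard
          have himg : Finset.univ.image e = s := by
            apply Finset.coe_injective
            rw [Finset.coe_image, Finset.coe_univ, Set.image_univ]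
            exact Finset.range_orderEmbOfFin s hcard
          rw [← himg, Finset.sum_image (fun i _ j _ hij => e.injective hij)]
          exact this
      _ = (ℓ.choose k : ℝ) * c := by
          rw [Finset.sum_const, Finset.card_powersetCard, Finset.card_univ, Fintype.card_fin,
            nsmul_eq_mul]
  -- double counting
  have hcount : ∑ s ∈ Finset.powersetCard k (Finset.univ : Finset (Fin ℓ)), (∑ j ∈ s, M j j)
      = ((ℓ - 1).choose (k - 1) : ℝ) * M.trace := by
    rw [Finset.sum_comm' (t' := Finset.univ)
      (s' := fun j => (Finset.powersetCard k (Finset.univ : Finset (Fin ℓ))).filter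
        (fun s => j ∈ s)) (t := fun s => s)]
    · rw [Matrix.trace, Finset.mul_sum]
      apply Finset.sum_congr rfl
      intro j _
      rw [Finset.sum_const, count_subsets_containing hk j, nsmul_eq_mul, Matrix.diag]
    · intro s j
      simp only [Finset.mem_filter, Finset.mem_univ, true_and, and_comm]
  rw [hcount] at hsum
  have hpos : (0 : ℝ) < ((ℓ - 1).choose (k - 1) : ℝ) := by
    exact_mod_cast Nat.choose_pos (by omega)
  have hch : (ℓ - 1).choose (k - 1) ≤ ℓ.choose k := by
    have h1 : ℓ - 1 + 1 = ℓ := by omega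
    have h2 : k - 1 + 1 = k := by omega
    calc (ℓ - 1).choose (k - 1) ≤ (ℓ - 1).choose (k - 1) + (ℓ - 1).choose (k - 1 + 1) :=
          Nat.le_add_right _ _
      _ = ((ℓ - 1) + 1).choose ((k - 1) + 1) := (Nat.choose_succ_succ _ _).symm
      _ = ℓ.choose k := by rw [h1, h2]
  have hle : (ℓ.choose k : ℝ) * c ≤ ((ℓ - 1).choose (k - 1) : ℝ) * c :=
    mul_le_mul_of_nonpos_right (by exact_mod_cast hch) hc
  have : ((ℓ - 1).choose (k - 1) : ℝ) * M.trace ≤ ((ℓ - 1).choose (k - 1) : ℝ) * c :=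
    hsum.trans hle
  exact le_of_mul_le_mul_left this hpos
end

section
/- (Theorem 1 of the paper, output-gain variant, stated in compound-free form.) Let A ∈ ℝ^{n×n}, B ∈ ℝ^{n×m}, C ∈ ℝ^{q×n}, let Q ∈ ℝ^{n×n} be symmetric positive definite, let η₁, η₂ ∈ ℝ, let k be an integer with 1 ≤ k ≤ n, and let K ∈ ℝ^{m×q}. Define S := QAQ⁻¹ + Q⁻¹AᵀQ + (η₁/k)Iₙ + QBBᵀQ + Q⁻¹CᵀCQ⁻¹. Assume: (i) tr(VᵀSV) ≤ 0 for every k-frame V ∈ ℝ^{n×k}; and (ii) tr(Vᵀ Q⁻¹Cᵀ(KᵀK − I_q)CQ⁻¹ V) ≤ −η₂ for every k-frame V. Then, setting J := A − BKC and R := QJQ⁻¹ + Q⁻¹JᵀQ, one has tr(VᵀRV) ≤ −(η₁ + η₂) for every k-frame V; i.e., the sum of the k largest eigenvalues of R is at most −(η₁+η₂). -/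
open Matrix

/-- **Theorem 1 of the paper (output-gain variant), compound-free form.**
If the `k`-ARI `tr(VᵀSV) ≤ 0` holds for every `k`-frame `V`, where
`S = QAQ⁻¹ + Q⁻¹AᵀQ + (η₁/k)Iₙ + QBBᵀQ + Q⁻¹CᵀCQ⁻¹`, and the output-gain condition
`tr(Vᵀ Q⁻¹Cᵀ(KᵀK − I)CQ⁻¹ V) ≤ −η₂` holds for every `k`-frame `V`, then with
`J = A − BKC` and `R = QJQ⁻¹ + Q⁻¹JᵀQ`, the sum of the `k` largest eigenvalues of `R`
is at most `−(η₁+η₂)`: `tr(VᵀRV) ≤ −(η₁+η₂)` for every `k`-frame `V`. -/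
theorem lurie_k_contraction_output_gain {n m q : ℕ} (k : ℕ) (hk1 : 1 ≤ k) (hkn : k ≤ n)
    (A : Matrix (Fin n) (Fin n) ℝ) (B : Matrix (Fin n) (Fin m) ℝ)
    (C : Matrix (Fin q) (Fin n) ℝ) (Q : Matrix (Fin n) (Fin n) ℝ) (hQ : Q.PosDef)
    (η₁ η₂ : ℝ) (K : Matrix (Fin m) (Fin q) ℝ)
    (hARI : ∀ V : Matrix (Fin n) (Fin k) ℝ, IsFrame V →
      (Vᵀ * (Q * A * Q⁻¹ + Q⁻¹ * Aᵀ * Q + (η₁ / k) • (1 : Matrix (Fin n) (Fin n) ℝ)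
          + Q * B * Bᵀ * Q + Q⁻¹ * Cᵀ * C * Q⁻¹) * V).trace ≤ 0)
    (hgain : ∀ V : Matrix (Fin n) (Fin k) ℝ, IsFrame V →
      (Vᵀ * (Q⁻¹ * Cᵀ * (Kᵀ * K - 1) * C * Q⁻¹) * V).trace ≤ -η₂) :
    ∀ V : Matrix (Fin n) (Fin k) ℝ, IsFrame V →
      (Vᵀ * (Q * (A - B * K * C) * Q⁻¹ + Q⁻¹ * (A - B * K * C)ᵀ * Q) * V).trace
        ≤ -(η₁ + η₂) := by
  intro V hV
  have hk0 : (k : ℝ) ≠ 0 := Nat.cast_ne_zero.mpr (by omega)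
  set S : Matrix (Fin n) (Fin n) ℝ :=
    Q * A * Q⁻¹ + Q⁻¹ * Aᵀ * Q + (η₁ / k) • (1 : Matrix (Fin n) (Fin n) ℝ)
      + Q * B * Bᵀ * Q + Q⁻¹ * Cᵀ * C * Q⁻¹ with hS
  set G : Matrix (Fin n) (Fin n) ℝ := Q⁻¹ * Cᵀ * (Kᵀ * K - 1) * C * Q⁻¹ with hG
  set M : Matrix (Fin n) (Fin m) ℝ := Q * B + Q⁻¹ * Cᵀ * Kᵀ with hM
  have hid : Q * (A - B * K * C) * Q⁻¹ + Q⁻¹ * (A - B * K * C)ᵀ * Q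
      = S - (η₁ / k) • (1 : Matrix (Fin n) (Fin n) ℝ) + G - M * Mᵀ := by
    have hQt : Qᵀ = Q := hQ.isHermitian.eq
    have hQit : Q⁻¹ᵀ = Q⁻¹ := by rw [Matrix.transpose_nonsing_inv, hQt]
    simp only [hS, hG, hM, Matrix.transpose_sub, Matrix.transpose_add, Matrix.transpose_mul,
      Matrix.transpose_transpose, hQt, hQit, Matrix.sub_mul, Matrix.mul_sub,
      Matrix.add_mul, Matrix.mul_add, Matrix.mul_one, Matrix.one_mul, Matrix.mul_assoc]
    abel
  rw [hid]
  have e1 : (Vᵀ * (S - (η₁ / k) • (1 : Matrix (Fin n) (Fin n) ℝ) + G - M * Mᵀ) * V).trace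
      = (Vᵀ * S * V).trace - (η₁ / k) * (Vᵀ * V).trace + (Vᵀ * G * V).trace
        - ((Mᵀ * V)ᵀ * (Mᵀ * V)).trace := by
    simp only [Matrix.mul_sub, Matrix.mul_add, Matrix.sub_mul, Matrix.add_mul,
      Matrix.trace_sub, Matrix.trace_add, Matrix.mul_smul, Matrix.smul_mul,
      Matrix.trace_smul, Matrix.mul_one, Matrix.transpose_mul, Matrix.transpose_transpose,
      smul_eq_mul, Matrix.mul_assoc]
  rw [e1, hV]
  have htr1 : ((1 : Matrix (Fin k) (Fin k) ℝ)).trace = (k : ℝ) := by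
    simp [Matrix.trace_one]
  have hpos : 0 ≤ ((Mᵀ * V)ᵀ * (Mᵀ * V)).trace := by
    rw [Matrix.trace]
    refine Finset.sum_nonneg fun i _ => ?_
    simp only [Matrix.diag_apply, Matrix.mul_apply, Matrix.transpose_apply]
    exact Finset.sum_nonneg fun j _ => mul_self_nonneg _
  have h1 := hARI V hV
  have h2 := hgain V hV
  rw [htr1]
  have : η₁ / k * k = η₁ := div_mul_cancel₀ η₁ hk0
  nlinarith [h1, h2, hpos]
end

section
/- (Theorem 1 of the paper, input-gain variant, stated in compound-free form.) Let A ∈ ℝ^{n×n}, B ∈ ℝ^{n×m}, C ∈ ℝ^{q×n}, let Q ∈ ℝ^{n×n} be symmetric positive definite, let η₁, η₂ ∈ ℝ, let k be an integer with 1 ≤ k ≤ n, and let K ∈ ℝ^{m×q}. Define S := QAQ⁻¹ + Q⁻¹AᵀQ + (η₁/k)Iₙ + QBBᵀQ + Q⁻¹CᵀCQ⁻¹. Assume: (i) tr(VᵀSV) ≤ 0 for every k-frame V ∈ ℝ^{n×k}; and (ii) tr(Vᵀ QB(KKᵀ − I_m)BᵀQ V) ≤ −η₂ for every k-frame V. Then,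 setting J := A − BKC and R := QJQ⁻¹ + Q⁻¹JᵀQ, one has tr(VᵀRV) ≤ −(η₁ + η₂) for every k-frame V; i.e., the sum of the k largest eigenvalues of R is at most −(η₁+η₂). -/
open Matrix

/-- **Theorem 1 of the paper (input-gain variant), compound-free form.**
If the `k`-ARI `tr(VᵀSV) ≤ 0` holds for every `k`-frame `V`, where
`S = QAQ⁻¹ + Q⁻¹AᵀQ + (η₁/k)Iₙ + QBBᵀQ + Q⁻¹CᵀCQ⁻¹`, and the input-gain condition
`tr(Vᵀ QB(KKᵀ − I)BᵀQ V) ≤ −η₂` holds for every `k`-frame `V`, then with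
`J = A − BKC` and `R = QJQ⁻¹ + Q⁻¹JᵀQ`, the sum of the `k` largest eigenvalues of `R`
is at most `−(η₁+η₂)`: `tr(VᵀRV) ≤ −(η₁+η₂)` for every `k`-frame `V`. -/
theorem lurie_k_contraction_input_gain {n m q : ℕ} (k : ℕ) (hk1 : 1 ≤ k) (hkn : k ≤ n)
    (A : Matrix (Fin n) (Fin n) ℝ) (B : Matrix (Fin n) (Fin m) ℝ)
    (C : Matrix (Fin q) (Fin n) ℝ) (Q : Matrix (Fin n) (Fin n) ℝ) (hQ : Q.PosDef)
    (η₁ η₂ : ℝ) (K : Matrix (Fin m) (Fin q) ℝ)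
    (hARI : ∀ V : Matrix (Fin n) (Fin k) ℝ, IsFrame V →
      (Vᵀ * (Q * A * Q⁻¹ + Q⁻¹ * Aᵀ * Q + (η₁ / k) • (1 : Matrix (Fin n) (Fin n) ℝ)
          + Q * B * Bᵀ * Q + Q⁻¹ * Cᵀ * C * Q⁻¹) * V).trace ≤ 0)
    (hgain : ∀ V : Matrix (Fin n) (Fin k) ℝ, IsFrame V →
      (Vᵀ * (Q * B * (K * Kᵀ - 1) * Bᵀ * Q) * V).trace ≤ -η₂) :
    ∀ V : Matrix (Fin n) (Fin k) ℝ, IsFrame V →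
      (Vᵀ * (Q * (A - B * K * C) * Q⁻¹ + Q⁻¹ * (A - B * K * C)ᵀ * Q) * V).trace
        ≤ -(η₁ + η₂) := by
  intro V hV
  have hk0 : (k : ℝ) ≠ 0 := by positivity
  have hQs : Qᵀ = Q := hQ.1.eq
  have hQis : (Q⁻¹)ᵀ = Q⁻¹ := by rw [Matrix.transpose_nonsing_inv, hQs]
  set S : Matrix (Fin n) (Fin n) ℝ :=
    Q * A * Q⁻¹ + Q⁻¹ * Aᵀ * Q + (η₁ / k) • (1 : Matrix (Fin n) (Fin n) ℝ)
      + Q * B * Bᵀ * Q + Q⁻¹ * Cᵀ * C * Q⁻¹ with hS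
  set G : Matrix (Fin n) (Fin n) ℝ := Q * B * (K * Kᵀ - 1) * Bᵀ * Q with hG
  set M : Matrix (Fin n) (Fin q) ℝ := Q * B * K + Q⁻¹ * Cᵀ with hM
  have key : Q * (A - B * K * C) * Q⁻¹ + Q⁻¹ * (A - B * K * C)ᵀ * Q
      = S + G - (η₁ / k) • (1 : Matrix (Fin n) (Fin n) ℝ) - M * Mᵀ := by
    simp only [hS, hG, hM, Matrix.transpose_sub, Matrix.transpose_add, Matrix.transpose_mul,
      Matrix.transpose_transpose, hQs, hQis, Matrix.mul_sub, Matrix.sub_mul,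
      Matrix.mul_add, Matrix.add_mul, Matrix.mul_one, Matrix.one_mul, Matrix.mul_assoc]
    abel
  rw [key]
  have expand : Vᵀ * (S + G - (η₁ / k) • (1 : Matrix (Fin n) (Fin n) ℝ) - M * Mᵀ) * V
      = Vᵀ * S * V + Vᵀ * G * V - (η₁ / k) • (Vᵀ * V) - (Mᵀ * V)ᵀ * (Mᵀ * V) := by
    simp only [Matrix.transpose_mul, Matrix.transpose_transpose, Matrix.mul_add,
      Matrix.add_mul, Matrix.mul_sub, Matrix.sub_mul, Matrix.mul_smul, Matrix.smul_mul,
      Matrix.mul_one, Matrix.mul_assoc]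
  rw [expand]
  have htrW : 0 ≤ ((Mᵀ * V)ᵀ * (Mᵀ * V)).trace := by
    rw [Matrix.trace]
    refine Finset.sum_nonneg fun i _ => ?_
    simp only [Matrix.diag_apply, Matrix.mul_apply, Matrix.transpose_apply]
    exact Finset.sum_nonneg fun j _ => mul_self_nonneg _
  have htr1 : ((η₁ / k) • (Vᵀ * V)).trace = η₁ := by
    rw [hV, Matrix.trace_smul, Matrix.trace_one]
    simp [div_mul_cancel₀, hk0]
  have h1 := hARI V hV
  have h2 := hgain V hV
  rw [Matrix.trace_sub, Matrix.trace_sub, Matrix.trace_add, htr1]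
  rw [hS] at h1
  rw [hG] at h2
  linarith
end

section
/- (Corollary on the scaled small-gain condition, compound-free form.) Let A ∈ ℝ^{n×n}, B ∈ ℝ^{n×m}, C ∈ ℝ^{q×n}, let Q ∈ ℝ^{n×n} be symmetric positive definite, let η₁ > 0, let γ > 0, let k be an integer with 1 ≤ k ≤ n, and let K ∈ ℝ^{m×q} with ‖K‖₂ ≤ γ (operator norm induced by the Euclidean norms). Define S_γ := QAQ⁻¹ + Q⁻¹AᵀQ + (η₁/k)Iₙ + γ²·QBBᵀQ + Q⁻¹CᵀCQ⁻¹. If tr(VᵀS_γV) ≤ 0 for every k-frame V ∈ ℝ^{n×k}, then, setting J := A − BKC and R := QJQ⁻¹ + Q⁻¹JᵀQ, one has tr(VᵀRV) ≤ −η₁ for every k-frame V. -/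
open Matrix

/-- The operator norm of a matrix, induced by the Euclidean norms
(i.e. the largest singular value). -/
noncomputable def l2OpNorm {n m : ℕ} (M : Matrix (Fin n) (Fin m) ℝ) : ℝ :=
  ‖LinearMap.toContinuousLinearMap (Matrix.toEuclideanLin M)‖

/-!
Write `X = QB` and `Y = Q⁻¹Cᵀ`. Since `Q` is symmetric, `S_γ = R + (η₁/k)I + N` with
`N = γ²XXᵀ + YYᵀ + XKYᵀ + YKᵀXᵀ`. Completing the square,
`N = WWᵀ + γ⁻²Y(γ²I − KᵀK)Yᵀ` with `W = γX + γ⁻¹YKᵀ`, and `γ²I − KᵀK ⪰ 0` because `‖K‖₂ ≤ γ`;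
so `N ⪰ 0`. For a `k`-frame `V` this gives `tr(VᵀRV) + η₁ ≤ tr(VᵀS_γV) ≤ 0`.
-/

lemma dotProduct_self_eq_norm_sq {ι : Type*} [Fintype ι] (x : ι → ℝ) :
    x ⬝ᵥ x = ‖WithLp.toLp 2 x‖ ^ 2 := by
  rw [EuclideanSpace.real_norm_sq_eq]
  simp [dotProduct, sq]

open scoped Matrix.Norms.L2Operator in
lemma dotProduct_mulVec_self_le_of_l2OpNorm_le {m q : ℕ} {K : Matrix (Fin m) (Fin q) ℝ} {γ : ℝ}
    (hK : l2OpNorm K ≤ γ) (x : Fin q → ℝ) :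
    (K *ᵥ x) ⬝ᵥ (K *ᵥ x) ≤ γ ^ 2 * (x ⬝ᵥ x) := by
  have hKx : ‖WithLp.toLp 2 (K *ᵥ x)‖ ≤ γ * ‖WithLp.toLp 2 x‖ :=
    (K.l2_opNorm_mulVec (WithLp.toLp 2 x)).trans (by gcongr; exact hK)
  rw [dotProduct_self_eq_norm_sq, dotProduct_self_eq_norm_sq, ← mul_pow]
  gcongr

lemma posSemidef_sq_smul_one_sub_transpose_mul_self {m q : ℕ} {K : Matrix (Fin m) (Fin q) ℝ}
    {γ : ℝ} (hK : l2OpNorm K ≤ γ) :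
    (γ ^ 2 • (1 : Matrix (Fin q) (Fin q) ℝ) - Kᵀ * K).PosSemidef := by
  refine .of_dotProduct_mulVec_nonneg ?_ fun x => ?_
  · simp [IsHermitian, transpose_sub]
  · have := dotProduct_mulVec_self_le_of_l2OpNorm_le hK x
    have hKx : x ⬝ᵥ ((Kᵀ * K) *ᵥ x) = (K *ᵥ x) ⬝ᵥ (K *ᵥ x) := by
      rw [← mulVec_mulVec, dotProduct_mulVec, vecMul_transpose]
    simp only [star_trivial, sub_mulVec, dotProduct_sub, smul_mulVec, one_mulVec, dotProduct_smul,
      smul_eq_mul, hKx]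
    linarith

lemma posSemidef_young_of_l2OpNorm_le {ι : Type*} [Fintype ι] {m q : ℕ}
    (X : Matrix ι (Fin m) ℝ) (Y : Matrix ι (Fin q) ℝ) {K : Matrix (Fin m) (Fin q) ℝ} {γ : ℝ}
    (hγ : 0 < γ) (hK : l2OpNorm K ≤ γ) :
    (γ ^ 2 • (X * Xᵀ) + Y * Yᵀ + (X * K * Yᵀ + Y * Kᵀ * Xᵀ)).PosSemidef := by
  have hsplit : γ ^ 2 • (X * Xᵀ) + Y * Yᵀ + (X * K * Yᵀ + Y * Kᵀ * Xᵀ)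
      = (γ • X + γ⁻¹ • (Y * Kᵀ)) * (γ • X + γ⁻¹ • (Y * Kᵀ))ᵀ
        + (γ⁻¹ • Y) * (γ ^ 2 • (1 : Matrix (Fin q) (Fin q) ℝ) - Kᵀ * K) * (γ⁻¹ • Y)ᵀ := by
    simp only [transpose_add, transpose_smul, transpose_mul, transpose_transpose,
      Matrix.add_mul, Matrix.mul_add, Matrix.mul_sub, Matrix.sub_mul, Matrix.smul_mul,
      Matrix.mul_smul, smul_smul, Matrix.mul_one, Matrix.mul_assoc]
    match_scalars <;> field_simp
    ring
  rw [hsplit]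
  exact (posSemidef_self_mul_conjTranspose _).add
    ((posSemidef_sq_smul_one_sub_transpose_mul_self hK).mul_mul_conjTranspose_same _)

lemma Matrix.PosSemidef.transpose_mul_mul_same {ι κ : Type*} [Fintype ι] [Fintype κ]
    {M : Matrix ι ι ℝ} (hM : M.PosSemidef) (V : Matrix ι κ ℝ) : (Vᵀ * M * V).PosSemidef :=
  hM.conjTranspose_mul_mul_same V

lemma IsFrame.trace_transpose_mul_smul_one_mul {n k : ℕ} {V : Matrix (Fin n) (Fin k) ℝ}
    (hV : IsFrame V) (c : ℝ) : (Vᵀ * (c • (1 : Matrix (Fin n) (Fin n) ℝ)) * V).trace = c * k := by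
  rw [Matrix.mul_smul, Matrix.mul_one, Matrix.smul_mul, hV, trace_smul, trace_one, Fintype.card_fin,
    smul_eq_mul]

lemma trace_transpose_mul_add_mul {ι κ : Type*} [Fintype ι] [Fintype κ] (V : Matrix ι κ ℝ)
    (M N : Matrix ι ι ℝ) : (Vᵀ * (M + N) * V).trace = (Vᵀ * M * V).trace + (Vᵀ * N * V).trace := by
  rw [Matrix.mul_add, Matrix.add_mul, trace_add]

lemma scaledARIMatrix_eq_closedLoop_add {ι : Type*} [Fintype ι] [DecidableEq ι] {m q : Type*}
    [Fintype m] [Fintype q] {Q : Matrix ι ι ℝ} (hQ : Qᵀ = Q) (A : Matrix ι ι ℝ)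
    (B : Matrix ι m ℝ) (C : Matrix q ι ℝ) (K : Matrix m q ℝ) (c γ : ℝ) :
    Q * A * Q⁻¹ + Q⁻¹ * Aᵀ * Q + c • (1 : Matrix ι ι ℝ) + γ ^ 2 • (Q * B * Bᵀ * Q)
        + Q⁻¹ * Cᵀ * C * Q⁻¹
      = Q * (A - B * K * C) * Q⁻¹ + Q⁻¹ * (A - B * K * C)ᵀ * Q + c • (1 : Matrix ι ι ℝ)
        + (γ ^ 2 • ((Q * B) * (Q * B)ᵀ) + (Q⁻¹ * Cᵀ) * (Q⁻¹ * Cᵀ)ᵀ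
          + ((Q * B) * K * (Q⁻¹ * Cᵀ)ᵀ + (Q⁻¹ * Cᵀ) * Kᵀ * (Q * B)ᵀ)) := by
  have hQinv : Q⁻¹ᵀ = Q⁻¹ := by rw [transpose_nonsing_inv, hQ]
  simp only [transpose_sub, transpose_mul, transpose_transpose, hQ, hQinv, Matrix.mul_sub,
    Matrix.sub_mul, Matrix.mul_assoc]
  abel

theorem lurie_k_contraction_small_gain_general {n m q : ℕ} (k : ℕ) (hk1 : 1 ≤ k)
    (A : Matrix (Fin n) (Fin n) ℝ) (B : Matrix (Fin n) (Fin m) ℝ)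
    (C : Matrix (Fin q) (Fin n) ℝ) (Q : Matrix (Fin n) (Fin n) ℝ) (hQ : Q.PosDef)
    (η₁ γ : ℝ) (hγ : 0 < γ)
    (K : Matrix (Fin m) (Fin q) ℝ) (hK : l2OpNorm K ≤ γ)
    (hARI : ∀ V : Matrix (Fin n) (Fin k) ℝ, IsFrame V →
      (Vᵀ * (Q * A * Q⁻¹ + Q⁻¹ * Aᵀ * Q + (η₁ / k) • (1 : Matrix (Fin n) (Fin n) ℝ)
          + γ ^ 2 • (Q * B * Bᵀ * Q) + Q⁻¹ * Cᵀ * C * Q⁻¹) * V).trace ≤ 0) :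
    ∀ V : Matrix (Fin n) (Fin k) ℝ, IsFrame V →
      (Vᵀ * (Q * (A - B * K * C) * Q⁻¹ + Q⁻¹ * (A - B * K * C)ᵀ * Q) * V).trace ≤ -η₁ := by
  intro V hV
  have hQt : Qᵀ = Q := by simpa using hQ.isHermitian.eq
  have hgain :=
    (posSemidef_young_of_l2OpNorm_le (Q * B) (Q⁻¹ * Cᵀ) hγ hK).transpose_mul_mul_same V
  have hk : (k : ℝ) ≠ 0 := Nat.cast_ne_zero.mpr (by omega)
  have hSV := hARI V hV
  rw [scaledARIMatrix_eq_closedLoop_add hQt A B C K] at hSV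
  rw [trace_transpose_mul_add_mul, trace_transpose_mul_add_mul,
    hV.trace_transpose_mul_smul_one_mul, div_mul_cancel₀ η₁ hk] at hSV
  linarith [hgain.trace_nonneg]

/-- **Corollary on the scaled small-gain condition, compound-free form.**
If `‖K‖₂ ≤ γ` and the scaled `k`-ARI `tr(Vᵀ S_γ V) ≤ 0` holds for every `k`-frame `V`,
where `S_γ = QAQ⁻¹ + Q⁻¹AᵀQ + (η₁/k)Iₙ + γ²QBBᵀQ + Q⁻¹CᵀCQ⁻¹`, then with `J = A − BKC`
and `R = QJQ⁻¹ + Q⁻¹JᵀQ` one has `tr(VᵀRV) ≤ −η₁` for every `k`-frame `V`. -/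
theorem lurie_k_contraction_small_gain {n m q : ℕ} (k : ℕ) (hk1 : 1 ≤ k) (hkn : k ≤ n)
    (A : Matrix (Fin n) (Fin n) ℝ) (B : Matrix (Fin n) (Fin m) ℝ)
    (C : Matrix (Fin q) (Fin n) ℝ) (Q : Matrix (Fin n) (Fin n) ℝ) (hQ : Q.PosDef)
    (η₁ γ : ℝ) (hη₁ : 0 < η₁) (hγ : 0 < γ)
    (K : Matrix (Fin m) (Fin q) ℝ) (hK : l2OpNorm K ≤ γ)
    (hARI : ∀ V : Matrix (Fin n) (Fin k) ℝ, IsFrame V →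
      (Vᵀ * (Q * A * Q⁻¹ + Q⁻¹ * Aᵀ * Q + (η₁ / k) • (1 : Matrix (Fin n) (Fin n) ℝ)
          + γ ^ 2 • (Q * B * Bᵀ * Q) + Q⁻¹ * Cᵀ * C * Q⁻¹) * V).trace ≤ 0) :
    ∀ V : Matrix (Fin n) (Fin k) ℝ, IsFrame V →
      (Vᵀ * (Q * (A - B * K * C) * Q⁻¹ + Q⁻¹ * (A - B * K * C)ᵀ * Q) * V).trace ≤ -η₁ :=
  lurie_k_contraction_small_gain_general k hk1 A B C Q hQ η₁ γ hγ K hK hARI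
end

section
/- (Theorem 2 of the paper, compound-free form.) Let D = diag(d₁,…,dₙ) ∈ ℝ^{n×n}, W₁ ∈ ℝ^{n×m}, W₂ ∈ ℝ^{q×n}, let Ω ⊆ ℝⁿ, let f : ℝ^q → ℝ^m be continuously differentiable with Jacobian matrix J_f(z) ∈ ℝ^{m×q} at z, and let k be an integer with 1 ≤ k ≤ n. Define α_k := (1/k)·min{ d_{i₁} + ⋯ + d_{i_k} : 1 ≤ i₁ < ⋯ < i_k ≤ n }. Assume α_k > 0 and that for all x ∈ Ω, ‖J_f(W₂x)‖₂² · Σ_{i=1}^k s_i(W₁)·s_i(W₂) < α_k²·k. Then for every x ∈ Ω, the Jacobian J(x) := −D + W₁ J_f(W₂x) W₂ of the networked system ẋ = −Dx + W₁ f(W₂x) + v satisfies tr(Vᵀ(J(x) + J(x)ᵀ)V) < 0 for every k-frame V ∈ ℝ^{n×k}; i.e., the sum of the k largest eigenvalues of J(x) + J(x)ᵀ is negative, so the system is k-contractive. -/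
open Matrix

/-- Rearrangement of a tuple in decreasing order. -/
noncomputable def sortedDesc {m : ℕ} (f : Fin m → ℝ) : Fin m → ℝ :=
  fun i => (f ∘ Tuple.sort f) i.rev

/-- The `i`-th largest squared singular value of a real matrix (the `i`-th largest
eigenvalue of `MᵀM`, counted with multiplicity), zero-indexed and padded by zero. -/
noncomputable def sqSingVal {n m : ℕ} (M : Matrix (Fin n) (Fin m) ℝ) (i : ℕ) : ℝ :=
  if h : i < m then
    sortedDesc (show (Mᵀ * M).IsHermitian by
      simpa using Matrix.isHermitian_conjTranspose_mul_self M).eigenvalues ⟨i, h⟩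
  else 0

/-! The Jacobian splits as `J = -D + C` with `C = W₁ A W₂`, `A = J_f(W₂x)`, so that
`tr Vᵀ(J + Jᵀ)V = 2 (tr VᵀCV - tr VᵀDV)` for a `k`-frame `V`.

The squared row norms `tᵢ` of `V` lie in `[0, 1]` and sum to `k`, and `tr VᵀDV = ∑ dᵢ tᵢ`;
a weighted sum with such weights is at least the sum of the `k` smallest `dᵢ`, i.e. `k α_k`.

By Cauchy–Schwarz, `tr VᵀCV ≤ ‖A‖₂ √(tr VᵀW₁W₁ᵀV · tr VᵀW₂ᵀW₂V)`. Writing `W₁W₁ᵀ` and `W₂ᵀW₂`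
as `GGᵀ` with `GᵀG = diag(s(W))`, each trace becomes `∑ⱼ sⱼ τⱼ` with weights `τⱼ ∈ [0, 1]`
summing to at most `k` (both by Bessel's inequality), hence at most the sum of the `k` largest
`sⱼ` (Ky Fan). Chebyshev's sum inequality bounds the product of these two sums by
`k ∑ sᵢ(W₁) sᵢ(W₂)`, and the gain condition makes the coupling term smaller than `k α_k`. -/

open Finset

section Threshold

variable {ι : Type*}

theorem sum_mul_le_sum_of_threshold [DecidableEq ι] (S A : Finset ι) (μ s : ι → ℝ) (c : ℝ)
    (hA : ∀ i ∈ A, c ≤ μ i) (hS : ∀ i ∈ S, i ∉ A → μ i ≤ c)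
    (hs0 : ∀ i ∈ S, 0 ≤ s i) (hs1 : ∀ i ∈ S, s i ≤ 1) (hsum : c * ∑ i ∈ S, s i ≤ c * #A) :
    ∑ i ∈ S, μ i * s i ≤ ∑ i ∈ A, μ i := by
  have hterm : ∀ i ∈ S, (μ i - c) * s i ≤ if i ∈ A then μ i - c else 0 := by
    intro i hi
    split_ifs with hiA
    · nlinarith [hA i hiA, hs1 i hi]
    · nlinarith [hS i hi hiA, hs0 i hi]
  calc ∑ i ∈ S, μ i * s i = ∑ i ∈ S, (μ i - c) * s i + c * ∑ i ∈ S, s i := by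
        rw [mul_sum, ← sum_add_distrib]
        exact sum_congr rfl fun i _ => by ring
    _ ≤ ∑ i ∈ S ∩ A, (μ i - c) + c * #A := by
        rw [← sum_ite_mem]
        exact add_le_add (sum_le_sum hterm) hsum
    _ ≤ ∑ i ∈ A, (μ i - c) + c * #A := by
        gcongr
        · exact fun i hi _ => sub_nonneg.2 (hA i hi)
        · exact inter_subset_right
    _ = ∑ i ∈ A, μ i := by
        rw [sum_sub_distrib, sum_const, nsmul_eq_mul]
        ring

theorem sum_mul_le_sum_range_of_antitone (S : Finset ℕ) (k : ℕ) {μ s : ℕ → ℝ}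
    (hμ : Antitone μ) (hμk : 0 ≤ μ k) (hs0 : ∀ i ∈ S, 0 ≤ s i) (hs1 : ∀ i ∈ S, s i ≤ 1)
    (hsum : ∑ i ∈ S, s i ≤ k) :
    ∑ i ∈ S, μ i * s i ≤ ∑ i ∈ range k, μ i := by
  refine sum_mul_le_sum_of_threshold S (range k) μ s (μ k) (fun i hi => hμ (mem_range.1 hi).le)
    (fun i _ hi => hμ (not_lt.1 (mem_range.not.1 hi))) hs0 hs1 ?_
  rw [card_range]
  exact mul_le_mul_of_nonneg_left hsum hμk

theorem sum_le_sum_mul_of_separated [Fintype ι] [DecidableEq ι] {I : Finset ι} (hI : I.Nonempty)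
    {d t : ι → ℝ} (hsep : ∀ i ∈ I, ∀ j ∉ I, d i ≤ d j) (ht0 : ∀ i, 0 ≤ t i) (ht1 : ∀ i, t i ≤ 1)
    (hsum : ∑ i, t i = #I) :
    ∑ i ∈ I, d i ≤ ∑ i, d i * t i := by
  obtain ⟨i₀, hi₀, hmax⟩ := exists_mem_eq_sup' hI d
  have h := sum_mul_le_sum_of_threshold univ I (-d) t (-I.sup' hI d)
    (fun i hi => neg_le_neg (le_sup' d hi))
    (fun j _ hj => neg_le_neg (hmax ▸ hsep i₀ hi₀ j hj))
    (fun i _ => ht0 i) (fun i _ => ht1 i) (by rw [hsum])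
  simpa only [Pi.neg_apply, neg_mul, sum_neg_distrib, neg_le_neg_iff] using h

theorem le_of_forall_card_eq_sum_le [DecidableEq ι] {I : Finset ι} {d : ι → ℝ}
    (hmin : ∀ J : Finset ι, #J = #I → ∑ i ∈ I, d i ≤ ∑ i ∈ J, d i) {i j : ι}
    (hi : i ∈ I) (hj : j ∉ I) : d i ≤ d j := by
  have hj' : j ∉ I.erase i := fun h => hj (mem_of_mem_erase h)
  have h := hmin (insert j (I.erase i)) (by
    rw [card_insert_of_notMem hj', card_erase_of_mem hi]
    exact Nat.sub_add_cancel (card_pos.2 ⟨i, hi⟩))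
  rw [sum_insert hj', ← add_sum_erase I d hi] at h
  linarith

end Threshold

section SortedDesc

variable {b : ℕ}

noncomputable def sortedDescPad (l : Fin b → ℝ) (i : ℕ) : ℝ :=
  if h : i < b then sortedDesc l ⟨i, h⟩ else 0

theorem sortedDescPad_nonneg {l : Fin b → ℝ} (hl : ∀ j, 0 ≤ l j) (i : ℕ) :
    0 ≤ sortedDescPad l i := by
  unfold sortedDescPad
  split_ifs
  exacts [hl _, le_rfl]

theorem sortedDescPad_antitone {l : Fin b → ℝ} (hl : ∀ j, 0 ≤ l j) :
    Antitone (sortedDescPad l) := by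
  intro i j hij
  unfold sortedDescPad
  by_cases hj : j < b
  · rw [dif_pos hj, dif_pos (hij.trans_lt hj)]
    exact Tuple.monotone_sort l (Fin.rev_le_rev.2 (Fin.mk_le_mk.2 hij))
  · rw [dif_neg hj]
    exact sortedDescPad_nonneg hl i

theorem sum_mul_le_sum_sortedDescPad {l t : Fin b → ℝ} (k : ℕ) (hl : ∀ j, 0 ≤ l j)
    (ht0 : ∀ j, 0 ≤ t j) (ht1 : ∀ j, t j ≤ 1) (hsum : ∑ j, t j ≤ k) :
    ∑ j, l j * t j ≤ ∑ i ∈ range k, sortedDescPad l i := by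
  set σ := Fin.revPerm.trans (Tuple.sort l)
  let s : ℕ → ℝ := fun i => if h : i < b then t (σ ⟨i, h⟩) else 0
  have hs : ∀ i : Fin b, s i = t (σ i) := fun i => dif_pos i.isLt
  have hrange : ∀ f : ℕ → ℝ, ∑ i ∈ range b, f i = ∑ i : Fin b, f i :=
    fun f => (Fin.sum_univ_eq_sum_range f b).symm
  have hsum' : ∑ i ∈ range b, s i ≤ k := by
    rwa [hrange, Fintype.sum_congr _ _ hs, Equiv.sum_comp σ t]
  calc ∑ j, l j * t j = ∑ i ∈ range b, sortedDescPad l i * s i := by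
        rw [hrange, ← Equiv.sum_comp σ]
        refine Fintype.sum_congr _ _ fun i => ?_
        rw [hs, sortedDescPad, dif_pos i.isLt]
        rfl
    _ ≤ ∑ i ∈ range k, sortedDescPad l i :=
        sum_mul_le_sum_range_of_antitone _ k (sortedDescPad_antitone hl)
          (sortedDescPad_nonneg hl k)
          (fun i _ => by simp only [s]; split_ifs; exacts [ht0 _, le_rfl])
          (fun i _ => by simp only [s]; split_ifs; exacts [ht1 _, zero_le_one]) hsum'

end SortedDesc

section Bessel

variable {m n : Type*} [Fintype m] [Fintype n] [DecidableEq n]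

-- Bessel's inequality for the orthogonal columns of `G`, of squared norms `l j`; a column with
-- `l j = 0` vanishes, and its term is `0` by the convention `y / 0 = 0`.
theorem sum_sq_mulVec_transpose_div_le {G : Matrix m n ℝ} {l : n → ℝ}
    (hG : Gᵀ * G = diagonal l) (x : m → ℝ) :
    ∑ j, (Gᵀ *ᵥ x) j ^ 2 / l j ≤ x ⬝ᵥ x := by
  set y := Gᵀ *ᵥ x
  -- `G *ᵥ w` is the orthogonal projection of `x` onto the column space of `G`
  set w : n → ℝ := fun j => y j / l j
  have hwy : ∀ j, w j * y j = y j ^ 2 / l j := fun j => by simp only [w]; ring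
  have hwlw : ∀ j, w j * (l j * w j) = y j ^ 2 / l j := fun j => by
    rcases eq_or_ne (l j) 0 with h | h
    · simp [w, h]
    · simp only [w]; field_simp
  have hcross : x ⬝ᵥ (G *ᵥ w) = ∑ j, y j ^ 2 / l j := by
    rw [dotProduct_mulVec, ← mulVec_transpose, dotProduct_comm]
    exact Fintype.sum_congr _ _ hwy
  have hgram : (G *ᵥ w) ⬝ᵥ (G *ᵥ w) = ∑ j, y j ^ 2 / l j := by
    rw [dotProduct_mulVec, ← mulVec_transpose, mulVec_mulVec, hG, dotProduct_comm]
    simp only [dotProduct, mulVec_diagonal]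
    exact Fintype.sum_congr _ _ hwlw
  have h := dotProduct_self_star_nonneg (x - G *ᵥ w)
  simp only [star_trivial, sub_dotProduct, dotProduct_sub, dotProduct_comm (G *ᵥ w) x,
    hcross, hgram] at h
  linarith

theorem sum_sq_mulVec_transpose_le {V : Matrix m n ℝ} (hV : Vᵀ * V = 1) (x : m → ℝ) :
    ∑ j, (Vᵀ *ᵥ x) j ^ 2 ≤ x ⬝ᵥ x := by
  simpa using sum_sq_mulVec_transpose_div_le (hV.trans diagonal_one.symm) x

end Bessel

theorem trace_transpose_mul_self_eq_sum_sq {a k : ℕ} (Y : Matrix (Fin a) (Fin k) ℝ) :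
    (Yᵀ * Y).trace = ∑ j, ∑ c, Y j c ^ 2 := by
  simp only [trace, Matrix.diag, mul_apply, transpose_apply, sq]
  exact Finset.sum_comm

namespace IsFrame

variable {n k : ℕ} {V : Matrix (Fin n) (Fin k) ℝ}

theorem transpose_apply_dotProduct_self (hV : IsFrame V) (c : Fin k) : Vᵀ c ⬝ᵥ Vᵀ c = 1 := by
  simpa [mul_apply, dotProduct] using congrFun₂ hV c c

theorem sum_sq_apply_le_one (hV : IsFrame V) (i : Fin n) : ∑ c, V i c ^ 2 ≤ 1 := by
  simpa using sum_sq_mulVec_transpose_le hV (Pi.single i 1)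

theorem sum_sum_sq_apply (hV : IsFrame V) : ∑ i, ∑ c, V i c ^ 2 = k := by
  rw [← trace_transpose_mul_self_eq_sum_sq, show Vᵀ * V = 1 from hV, trace_one, Fintype.card_fin]

end IsFrame

theorem trace_frame_mul_gram_le {a b k : ℕ} {G : Matrix (Fin a) (Fin b) ℝ} {l : Fin b → ℝ}
    (hG : Gᵀ * G = diagonal l) {V : Matrix (Fin a) (Fin k) ℝ} (hV : IsFrame V) :
    (Vᵀ * (G * Gᵀ) * V).trace ≤ ∑ i ∈ range k, sortedDescPad l i := by
  set Y := Gᵀ * V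
  have hcol : ∀ j, Gᵀ j ⬝ᵥ Gᵀ j = l j := fun j => by
    simpa [mul_apply, dotProduct] using congrFun₂ hG j j
  have hl0 : ∀ j, 0 ≤ l j := fun j => hcol j ▸ dotProduct_self_star_nonneg (Gᵀ j)
  have hYrow : ∀ j c, Y j c = (Vᵀ *ᵥ Gᵀ j) c := fun j c => by
    simp [Y, mul_apply, mulVec, dotProduct, mul_comm]
  have hYcol : ∀ j c, Y j c = (Gᵀ *ᵥ Vᵀ c) j := fun _ _ => rfl
  -- the share of the normalised `j`-th column of `G` that lies in the span of `V`
  set τ : Fin b → ℝ := fun j => (∑ c, Y j c ^ 2) / l j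
  have hlτ : ∀ j, l j * τ j = ∑ c, Y j c ^ 2 := fun j => by
    rcases eq_or_ne (l j) 0 with h | h
    · have hG0 : Gᵀ j = 0 := dotProduct_self_eq_zero.1 ((hcol j).trans h)
      simp [hYrow, hG0, h]
    · exact mul_div_cancel₀ _ h
  have hτ1 : ∀ j, τ j ≤ 1 := fun j => by
    refine div_le_one_of_le₀ ?_ (hl0 j)
    simpa only [hYrow, hcol] using sum_sq_mulVec_transpose_le hV (Gᵀ j)
  have hτsum : ∑ j, τ j ≤ k := calc
    ∑ j, τ j = ∑ c, ∑ j, (Gᵀ *ᵥ Vᵀ c) j ^ 2 / l j := by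
      simp only [τ, sum_div, hYcol]
      exact Finset.sum_comm
    _ ≤ ∑ c, Vᵀ c ⬝ᵥ Vᵀ c := sum_le_sum fun c _ => sum_sq_mulVec_transpose_div_le hG _
    _ = k := by simp [hV.transpose_apply_dotProduct_self]
  calc (Vᵀ * (G * Gᵀ) * V).trace = ∑ j, ∑ c, Y j c ^ 2 := by
        rw [← trace_transpose_mul_self_eq_sum_sq]
        simp only [Y, transpose_mul, transpose_transpose, Matrix.mul_assoc]
    _ = ∑ j, l j * τ j := (Fintype.sum_congr _ _ hlτ).symm
    _ ≤ ∑ i ∈ range k, sortedDescPad l i :=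
        sum_mul_le_sum_sortedDescPad k hl0 (fun j => div_nonneg (by positivity) (hl0 j)) hτ1 hτsum

theorem Matrix.IsHermitian.exists_orthogonal_eq_conj_diagonal {n : Type*} [Fintype n]
    [DecidableEq n] {M : Matrix n n ℝ} (hM : M.IsHermitian) :
    ∃ U : Matrix n n ℝ, Uᵀ * U = 1 ∧ U * Uᵀ = 1 ∧ M = U * diagonal hM.eigenvalues * Uᵀ := by
  refine ⟨hM.eigenvectorUnitary, ?_, ?_, ?_⟩
  all_goals simp_rw [← conjTranspose_eq_transpose_of_trivial, ← star_eq_conjTranspose]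
  · exact Unitary.coe_star_mul_self hM.eigenvectorUnitary
  · exact Unitary.coe_mul_star_self hM.eigenvectorUnitary
  · simpa [Unitary.conjStarAlgAut_apply] using hM.spectral_theorem

section SingularValues

variable {a b k : ℕ}

theorem isHermitian_transpose_mul_self (B : Matrix (Fin a) (Fin b) ℝ) :
    (Bᵀ * B).IsHermitian := by
  simpa using isHermitian_conjTranspose_mul_self B

theorem sqSingVal_eq_sortedDescPad (B : Matrix (Fin a) (Fin b) ℝ) :
    sqSingVal B = sortedDescPad (isHermitian_transpose_mul_self B).eigenvalues := rfl

theorem eigenvalues_transpose_mul_self_nonneg (B : Matrix (Fin a) (Fin b) ℝ) (j : Fin b) :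
    0 ≤ (isHermitian_transpose_mul_self B).eigenvalues j := by
  have hpsd : (Bᵀ * B).PosSemidef := by simpa using posSemidef_conjTranspose_mul_self B
  exact hpsd.eigenvalues_nonneg j

theorem sqSingVal_nonneg (B : Matrix (Fin a) (Fin b) ℝ) (i : ℕ) : 0 ≤ sqSingVal B i :=
  sortedDescPad_nonneg (eigenvalues_transpose_mul_self_nonneg B) i

theorem sqSingVal_antitone (B : Matrix (Fin a) (Fin b) ℝ) : Antitone (sqSingVal B) :=
  sortedDescPad_antitone (eigenvalues_transpose_mul_self_nonneg B)

theorem trace_frame_transpose_mul_self_le (B : Matrix (Fin a) (Fin b) ℝ)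
    {V : Matrix (Fin b) (Fin k) ℝ} (hV : IsFrame V) :
    (Vᵀ * (Bᵀ * B) * V).trace ≤ ∑ i ∈ range k, sqSingVal B i := by
  set hM := isHermitian_transpose_mul_self B
  obtain ⟨U, hU, -, hBB⟩ := hM.exists_orthogonal_eq_conj_diagonal
  set R := diagonal fun j => √(hM.eigenvalues j)
  have hRR : R * R = diagonal hM.eigenvalues := by
    rw [diagonal_mul_diagonal]
    exact congrArg diagonal (funext fun j =>
      Real.mul_self_sqrt (eigenvalues_transpose_mul_self_nonneg B j))
  have hG : (U * R)ᵀ * (U * R) = diagonal hM.eigenvalues := by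
    rw [transpose_mul, diagonal_transpose, Matrix.mul_assoc, ← Matrix.mul_assoc Uᵀ, hU,
      Matrix.one_mul, hRR]
  have hGG : U * R * (U * R)ᵀ = Bᵀ * B := by
    rw [transpose_mul, diagonal_transpose, Matrix.mul_assoc, ← Matrix.mul_assoc R, hRR,
      ← Matrix.mul_assoc, ← hBB]
  rw [← hGG, sqSingVal_eq_sortedDescPad]
  exact trace_frame_mul_gram_le hG hV

theorem trace_frame_mul_transpose_self_le (B : Matrix (Fin a) (Fin b) ℝ)
    {V : Matrix (Fin a) (Fin k) ℝ} (hV : IsFrame V) :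
    (Vᵀ * (B * Bᵀ) * V).trace ≤ ∑ i ∈ range k, sqSingVal B i := by
  set hM := isHermitian_transpose_mul_self B
  obtain ⟨U, hU, hU', hBB⟩ := hM.exists_orthogonal_eq_conj_diagonal
  have hG : (B * U)ᵀ * (B * U) = diagonal hM.eigenvalues := calc
    (B * U)ᵀ * (B * U) = Uᵀ * (Bᵀ * B) * U := by simp only [transpose_mul, Matrix.mul_assoc]
    _ = (Uᵀ * U) * diagonal hM.eigenvalues * (Uᵀ * U) := by
      rw [congrArg (fun X => Uᵀ * X * U) hBB]
      simp only [Matrix.mul_assoc]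
    _ = diagonal hM.eigenvalues := by rw [hU, Matrix.one_mul, Matrix.mul_one]
  have hGG : B * U * (B * U)ᵀ = B * Bᵀ := by
    rw [transpose_mul, Matrix.mul_assoc, ← Matrix.mul_assoc U, hU', Matrix.one_mul]
  rw [← hGG, sqSingVal_eq_sortedDescPad]
  exact trace_frame_mul_gram_le hG hV

theorem sum_sqSingVal_mul_sum_le (B₁ : Matrix (Fin a) (Fin b) ℝ) {c d : ℕ}
    (B₂ : Matrix (Fin c) (Fin d) ℝ) :
    (∑ i ∈ range k, sqSingVal B₁ i) * ∑ i ∈ range k, sqSingVal B₂ i ≤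
      k * ∑ i ∈ range k, sqSingVal B₁ i * sqSingVal B₂ i := by
  simpa using (((sqSingVal_antitone B₁).monovary (sqSingVal_antitone B₂)).monovaryOn
    (range k)).sum_mul_sum_le_card_mul_sum

end SingularValues

theorem trace_transpose_mul_diagonal_mul {n k : ℕ} (d : Fin n → ℝ)
    (V : Matrix (Fin n) (Fin k) ℝ) :
    (Vᵀ * diagonal d * V).trace = ∑ i, d i * ∑ c, V i c ^ 2 := by
  simp only [trace, Matrix.diag, mul_apply, transpose_apply, diagonal_apply, mul_ite, mul_zero,
    sum_ite_eq', mem_univ, if_true, mul_sum]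
  rw [Finset.sum_comm]
  exact Fintype.sum_congr _ _ fun i => Fintype.sum_congr _ _ fun c => by ring


theorem le_trace_frame_diagonal {n k : ℕ} (hk : 1 ≤ k) {d : Fin n → ℝ} {s : ℝ}
    (hs : IsLeast {s : ℝ | ∃ I : Finset (Fin n), #I = k ∧ ∑ i ∈ I, d i = s} s)
    {V : Matrix (Fin n) (Fin k) ℝ} (hV : IsFrame V) :
    s ≤ (Vᵀ * diagonal d * V).trace := by
  obtain ⟨I, hI, rfl⟩ := hs.1
  have hsep : ∀ i ∈ I, ∀ j ∉ I, d i ≤ d j := fun i hi j hj =>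
    le_of_forall_card_eq_sum_le (fun J hJ => hs.2 ⟨J, hJ.trans hI, rfl⟩) hi hj
  rw [trace_transpose_mul_diagonal_mul]
  exact sum_le_sum_mul_of_separated (card_pos.1 (hI ▸ hk)) hsep
    (fun i => by positivity) hV.sum_sq_apply_le_one (by rw [hV.sum_sum_sq_apply, hI])

theorem dotProduct_mulVec_le_l2OpNorm {m q : ℕ} (A : Matrix (Fin m) (Fin q) ℝ)
    (x : Fin m → ℝ) (y : Fin q → ℝ) :
    x ⬝ᵥ (A *ᵥ y) ≤ ‖WithLp.toLp 2 x‖ * (l2OpNorm A * ‖WithLp.toLp 2 y‖) := by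
  calc x ⬝ᵥ (A *ᵥ y) = inner ℝ (WithLp.toLp 2 (A *ᵥ y)) (WithLp.toLp 2 x) := by
        simp [EuclideanSpace.inner_toLp_toLp]
    _ ≤ ‖WithLp.toLp 2 (A *ᵥ y)‖ * ‖WithLp.toLp 2 x‖ := real_inner_le_norm _ _
    _ ≤ (l2OpNorm A * ‖WithLp.toLp 2 y‖) * ‖WithLp.toLp 2 x‖ := by
        gcongr
        exact (LinearMap.toContinuousLinearMap (toEuclideanLin A)).le_opNorm (WithLp.toLp 2 y)
    _ = _ := mul_comm _ _

theorem norm_toLp_sq {n : ℕ} (x : Fin n → ℝ) : ‖WithLp.toLp 2 x‖ ^ 2 = x ⬝ᵥ x := by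
  rw [EuclideanSpace.real_norm_sq_eq]
  simp [dotProduct, sq]

theorem trace_transpose_mul_self_eq_sum_norm_sq {n k : ℕ} (Z : Matrix (Fin n) (Fin k) ℝ) :
    (Zᵀ * Z).trace = ∑ c, ‖WithLp.toLp 2 (Zᵀ c)‖ ^ 2 := by
  simp only [norm_toLp_sq]
  rfl

theorem trace_conj_mul_mul_le {n m q k : ℕ} (B₁ : Matrix (Fin n) (Fin m) ℝ)
    (A : Matrix (Fin m) (Fin q) ℝ) (B₂ : Matrix (Fin q) (Fin n) ℝ) (V : Matrix (Fin n) (Fin k) ℝ) :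
    (Vᵀ * (B₁ * A * B₂) * V).trace ≤
      l2OpNorm A * √((Vᵀ * (B₁ * B₁ᵀ) * V).trace * (Vᵀ * (B₂ᵀ * B₂) * V).trace) := by
  set X := B₁ᵀ * V
  set Y := B₂ * V
  have hXAY : Vᵀ * (B₁ * A * B₂) * V = Xᵀ * (A * Y) := by
    simp only [X, Y, transpose_mul, transpose_transpose, Matrix.mul_assoc]
  have hXX : Vᵀ * (B₁ * B₁ᵀ) * V = Xᵀ * X := by
    simp only [X, transpose_mul, transpose_transpose, Matrix.mul_assoc]
  have hYY : Vᵀ * (B₂ᵀ * B₂) * V = Yᵀ * Y := by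
    simp only [Y, transpose_mul, Matrix.mul_assoc]
  rw [hXAY, hXX, hYY, trace_transpose_mul_self_eq_sum_norm_sq,
    trace_transpose_mul_self_eq_sum_norm_sq, Real.sqrt_mul (by positivity)]
  calc (Xᵀ * (A * Y)).trace = ∑ c, Xᵀ c ⬝ᵥ (A *ᵥ Yᵀ c) := rfl
    _ ≤ ∑ c, ‖WithLp.toLp 2 (Xᵀ c)‖ * (l2OpNorm A * ‖WithLp.toLp 2 (Yᵀ c)‖) :=
        sum_le_sum fun c _ => dotProduct_mulVec_le_l2OpNorm A _ _
    _ = l2OpNorm A * ∑ c, ‖WithLp.toLp 2 (Xᵀ c)‖ * ‖WithLp.toLp 2 (Yᵀ c)‖ := by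
        rw [mul_sum]
        exact Fintype.sum_congr _ _ fun c => by ring
    _ ≤ _ := by
        gcongr
        · exact norm_nonneg _
        · exact Real.sum_mul_le_sqrt_mul_sqrt _ _ _

theorem trace_frame_mul_mul_le {n m q k : ℕ} (B₁ : Matrix (Fin n) (Fin m) ℝ)
    (A : Matrix (Fin m) (Fin q) ℝ) (B₂ : Matrix (Fin q) (Fin n) ℝ) {V : Matrix (Fin n) (Fin k) ℝ}
    (hV : IsFrame V) :
    (Vᵀ * (B₁ * A * B₂) * V).trace ≤
      l2OpNorm A * √(k * ∑ i ∈ range k, sqSingVal B₁ i * sqSingVal B₂ i) := by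
  refine (trace_conj_mul_mul_le B₁ A B₂ V).trans
    (mul_le_mul_of_nonneg_left (Real.sqrt_le_sqrt ?_) (norm_nonneg _))
  have hT₂ : 0 ≤ (Vᵀ * (B₂ᵀ * B₂) * V).trace := by
    rw [show Vᵀ * (B₂ᵀ * B₂) * V = (B₂ * V)ᵀ * (B₂ * V) by
      simp only [transpose_mul, Matrix.mul_assoc], trace_transpose_mul_self_eq_sum_norm_sq]
    positivity
  calc (Vᵀ * (B₁ * B₁ᵀ) * V).trace * (Vᵀ * (B₂ᵀ * B₂) * V).trace
      ≤ (∑ i ∈ range k, sqSingVal B₁ i) * ∑ i ∈ range k, sqSingVal B₂ i :=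
        mul_le_mul (trace_frame_mul_transpose_self_le B₁ hV)
          (trace_frame_transpose_mul_self_le B₂ hV) hT₂
          (sum_nonneg fun i _ => sqSingVal_nonneg B₁ i)
    _ ≤ k * ∑ i ∈ range k, sqSingVal B₁ i * sqSingVal B₂ i := sum_sqSingVal_mul_sum_le B₁ B₂

theorem trace_conj_add_transpose {n k : ℕ} (M : Matrix (Fin n) (Fin n) ℝ)
    (V : Matrix (Fin n) (Fin k) ℝ) :
    (Vᵀ * (M + Mᵀ) * V).trace = 2 * (Vᵀ * M * V).trace := by
  have h : (Vᵀ * Mᵀ * V).trace = (Vᵀ * M * V).trace := by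
    rw [← trace_transpose (Vᵀ * M * V)]
    simp only [transpose_mul, transpose_transpose, Matrix.mul_assoc]
  rw [Matrix.mul_add, Matrix.add_mul, trace_add, h, two_mul]

theorem networked_k_contraction_general {n m q : ℕ} (k : ℕ) (hk1 : 1 ≤ k)
    (d : Fin n → ℝ) (W₁ : Matrix (Fin n) (Fin m) ℝ) (W₂ : Matrix (Fin q) (Fin n) ℝ)
    (Ω : Set (Fin n → ℝ))
    (Jf : (Fin q → ℝ) → Matrix (Fin m) (Fin q) ℝ)
    (αk : ℝ)
    (hαk : IsLeast {s : ℝ | ∃ I : Finset (Fin n), I.card = k ∧ ∑ i ∈ I, d i = s}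
      ((k : ℝ) * αk))
    (hα : 0 < αk)
    (hgain : ∀ x ∈ Ω, (l2OpNorm (Jf (W₂ *ᵥ x))) ^ 2 *
        ∑ i ∈ Finset.range k, sqSingVal W₁ i * sqSingVal W₂ i < αk ^ 2 * k) :
    ∀ x ∈ Ω, ∀ V : Matrix (Fin n) (Fin k) ℝ, IsFrame V →
      (Vᵀ * ((-(Matrix.diagonal d) + W₁ * Jf (W₂ *ᵥ x) * W₂)
        + (-(Matrix.diagonal d) + W₁ * Jf (W₂ *ᵥ x) * W₂)ᵀ) * V).trace < 0 := by
  intro x hx V hV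
  set C := W₁ * Jf (W₂ *ᵥ x) * W₂
  set S := ∑ i ∈ Finset.range k, sqSingVal W₁ i * sqSingVal W₂ i
  have hS : 0 ≤ S :=
    sum_nonneg fun i _ => mul_nonneg (sqSingVal_nonneg W₁ i) (sqSingVal_nonneg W₂ i)
  have hkα : 0 < (k : ℝ) * αk := mul_pos (by exact_mod_cast hk1) hα
  have hcoupling : l2OpNorm (Jf (W₂ *ᵥ x)) * √(k * S) < k * αk := by
    refine lt_of_pow_lt_pow_left₀ 2 hkα.le ?_
    rw [mul_pow, Real.sq_sqrt (by positivity)]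
    nlinarith [hgain x hx]
  have hsplit : (Vᵀ * (-diagonal d + C) * V).trace =
      (Vᵀ * C * V).trace - (Vᵀ * diagonal d * V).trace := by
    simp only [Matrix.mul_add, Matrix.add_mul, Matrix.mul_neg, Matrix.neg_mul, trace_add,
      trace_neg, sub_eq_neg_add]
  rw [trace_conj_add_transpose, hsplit]
  linarith [le_trace_frame_diagonal hk1 hαk hV, trace_frame_mul_mul_le W₁ (Jf (W₂ *ᵥ x)) W₂ hV]

/-- **Theorem 2 of the paper, compound-free form.** Consider the networked system
`ẋ = −Dx + W₁ f(W₂x) + v`, with `D = diag(d)` and `f` continuously differentiable with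
Jacobian `J_f`.  Let `α_k` be `1/k` times the minimal sum of `k` of the `dᵢ`'s (expressed
via `IsLeast`).  If `α_k > 0` and `‖J_f(W₂x)‖₂² Σ_{i=1}^k s_i(W₁)s_i(W₂) < α_k²k` on `Ω`,
then for every `x ∈ Ω` the Jacobian `J(x) = −D + W₁ J_f(W₂x) W₂` satisfies
`tr(Vᵀ(J(x)+J(x)ᵀ)V) < 0` for every `k`-frame `V`, i.e. the sum of the `k` largest
eigenvalues of `J(x)+J(x)ᵀ` is negative, so the system is `k`-contractive. -/
theorem networked_k_contraction {n m q : ℕ} (k : ℕ) (hk1 : 1 ≤ k) (hkn : k ≤ n)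
    (d : Fin n → ℝ) (W₁ : Matrix (Fin n) (Fin m) ℝ) (W₂ : Matrix (Fin q) (Fin n) ℝ)
    (Ω : Set (Fin n → ℝ)) (v : Fin n → ℝ)
    (f : (Fin q → ℝ) → (Fin m → ℝ)) (hf : ContDiff ℝ 1 f)
    (Jf : (Fin q → ℝ) → Matrix (Fin m) (Fin q) ℝ)
    (hJf : ∀ z, HasFDerivAt f (Matrix.mulVecLin (Jf z)).toContinuousLinearMap z)
    (αk : ℝ)
    (hαk : IsLeast {s : ℝ | ∃ I : Finset (Fin n), I.card = k ∧ ∑ i ∈ I, d i = s}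
      ((k : ℝ) * αk))
    (hα : 0 < αk)
    (hgain : ∀ x ∈ Ω, (l2OpNorm (Jf (W₂ *ᵥ x))) ^ 2 *
        ∑ i ∈ Finset.range k, sqSingVal W₁ i * sqSingVal W₂ i < αk ^ 2 * k) :
    ∀ x ∈ Ω, ∀ V : Matrix (Fin n) (Fin k) ℝ, IsFrame V →
      (Vᵀ * ((-(Matrix.diagonal d) + W₁ * Jf (W₂ *ᵥ x) * W₂)
        + (-(Matrix.diagonal d) + W₁ * Jf (W₂ *ᵥ x) * W₂)ᵀ) * V).trace < 0 :=
  networked_k_contraction_general k hk1 d W₁ W₂ Ω Jf αk hαk hα hgain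
end

section
/- (Corollary 8 of the paper, first part: contraction of the Hopfield network.) Let α ∈ ℝ and W ∈ ℝ^{n×n}, and suppose ‖W‖₂ < α. For x ∈ ℝⁿ let J(x) := −αIₙ + W·diag(1 − tanh²(x₁), …, 1 − tanh²(xₙ)) denote the Jacobian of the Hopfield network ẋ = −αx + W f(x), where f(x)_i = tanh(x_i). Then for every x ∈ ℝⁿ and every unit vector v ∈ ℝⁿ, vᵀ(J(x) + J(x)ᵀ)v ≤ 2(‖W‖₂ − α) < 0; i.e., the largest eigenvalue of J(x)+J(x)ᵀ is at most 2(‖W‖₂ − α), so the network is contractive. -/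
/-! The quadratic form of `J + Jᵀ` is twice that of `J`. Writing `D = diag(1 − tanh² xᵢ)`, whose
entries lie in `(0, 1]`, one has `vᵀ J v = −α‖v‖² + ⟨v, W (D v)⟩`, and by Cauchy–Schwarz
`⟨v, W (D v)⟩ ≤ ‖W‖₂ ‖D v‖ ‖v‖ ≤ ‖W‖₂ ‖v‖²`. -/

open Matrix

lemma dotProduct_add_transpose_mulVec {ι R : Type*} [Fintype ι] [CommSemiring R]
    (A : Matrix ι ι R) (v : ι → R) :
    v ⬝ᵥ ((A + Aᵀ) *ᵥ v) = 2 * (v ⬝ᵥ (A *ᵥ v)) := by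
  rw [add_mulVec, dotProduct_add, dotProduct_mulVec v Aᵀ v, vecMul_transpose,
    dotProduct_comm (A *ᵥ v), two_mul]

lemma dotProduct_mulVec_le_l2OpNorm_s8 {n m : ℕ} (M : Matrix (Fin n) (Fin m) ℝ)
    (v : Fin n → ℝ) (u : Fin m → ℝ) :
    v ⬝ᵥ (M *ᵥ u) ≤ l2OpNorm M * √(∑ i, v i ^ 2) * √(∑ j, u j ^ 2) := by
  set T := LinearMap.toContinuousLinearMap (Matrix.toEuclideanLin M)
  have hinner : v ⬝ᵥ (M *ᵥ u) = inner ℝ (WithLp.toLp 2 v) (T (WithLp.toLp 2 u)) := by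
    rw [EuclideanSpace.inner_eq_star_dotProduct]
    simp [T, dotProduct_comm]
  have hnorm {k : ℕ} (w : Fin k → ℝ) : ‖WithLp.toLp 2 w‖ = √(∑ i, w i ^ 2) := by
    simp [EuclideanSpace.norm_eq]
  calc v ⬝ᵥ (M *ᵥ u) ≤ ‖WithLp.toLp 2 v‖ * ‖T (WithLp.toLp 2 u)‖ :=
        hinner ▸ real_inner_le_norm _ _
    _ ≤ ‖WithLp.toLp 2 v‖ * (‖T‖ * ‖WithLp.toLp 2 u‖) :=
        mul_le_mul_of_nonneg_left (T.le_opNorm _) (norm_nonneg _)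
    _ = l2OpNorm M * √(∑ i, v i ^ 2) * √(∑ j, u j ^ 2) := by
        rw [hnorm, hnorm, l2OpNorm]; ring

lemma sum_sq_diagonal_mulVec_le {ι : Type*} [Fintype ι] [DecidableEq ι] {d : ι → ℝ}
    (hd : ∀ i, |d i| ≤ 1) (v : ι → ℝ) :
    ∑ i, (diagonal d *ᵥ v) i ^ 2 ≤ ∑ i, v i ^ 2 := by
  refine Finset.sum_le_sum fun i _ => ?_
  rw [mulVec_diagonal, mul_pow, ← sq_abs (d i)]
  exact mul_le_of_le_one_left (sq_nonneg _) (pow_le_one₀ (abs_nonneg _) (hd i))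

lemma dotProduct_neg_smul_one_add_mul_diagonal_mulVec_le {n : ℕ} (α : ℝ)
    (W : Matrix (Fin n) (Fin n) ℝ) {d : Fin n → ℝ} (hd : ∀ i, |d i| ≤ 1) {v : Fin n → ℝ}
    (hv : ∑ i, v i ^ 2 = 1) :
    v ⬝ᵥ ((-α • (1 : Matrix (Fin n) (Fin n) ℝ) + W * diagonal d) *ᵥ v) ≤ l2OpNorm W - α := by
  have hvv : v ⬝ᵥ v = 1 := by simpa only [dotProduct, sq] using hv
  have hDv : √(∑ i, (diagonal d *ᵥ v) i ^ 2) ≤ 1 :=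
    Real.sqrt_le_one.mpr (hv ▸ sum_sq_diagonal_mulVec_le hd v)
  have hWDv : v ⬝ᵥ (W *ᵥ (diagonal d *ᵥ v)) ≤ l2OpNorm W := by
    have hCS := dotProduct_mulVec_le_l2OpNorm_s8 W v (diagonal d *ᵥ v)
    rw [hv, Real.sqrt_one, mul_one] at hCS
    exact hCS.trans (mul_le_of_le_one_right (norm_nonneg _) hDv)
  rw [add_mulVec, dotProduct_add, smul_mulVec, one_mulVec, dotProduct_smul, hvv,
    ← mulVec_mulVec, smul_eq_mul, mul_one]
  linarith

lemma abs_one_sub_tanh_sq_le_one (x : ℝ) : |1 - Real.tanh x ^ 2| ≤ 1 :=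
  abs_le.mpr ⟨by linarith [Real.tanh_sq_lt_one x], by linarith [sq_nonneg (Real.tanh x)]⟩

/-- **Corollary 8 of the paper, first part: contraction of the Hopfield network.**
If `‖W‖₂ < α`, then the Jacobian `J(x) = −αI + W·diag(1 − tanh²(xᵢ))` of the Hopfield
network `ẋ = −αx + W tanh(x)` satisfies `vᵀ(J(x)+J(x)ᵀ)v ≤ 2(‖W‖₂ − α) < 0` for every
`x ∈ ℝⁿ` and every unit vector `v`, so the network is contractive. -/
theorem hopfield_contraction {n : ℕ} (α : ℝ) (W : Matrix (Fin n) (Fin n) ℝ)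
    (hW : l2OpNorm W < α) :
    ∀ x v : Fin n → ℝ, ∑ i, v i ^ 2 = 1 →
      (v ⬝ᵥ (((-α • (1 : Matrix (Fin n) (Fin n) ℝ)
            + W * Matrix.diagonal fun i => 1 - Real.tanh (x i) ^ 2)
          + (-α • (1 : Matrix (Fin n) (Fin n) ℝ)
            + W * Matrix.diagonal fun i => 1 - Real.tanh (x i) ^ 2)ᵀ) *ᵥ v)
        ≤ 2 * (l2OpNorm W - α)) ∧ 2 * (l2OpNorm W - α) < 0 := by
  intro x v hv
  refine ⟨?_, by linarith⟩
  rw [dotProduct_add_transpose_mulVec]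
  have hJ := dotProduct_neg_smul_one_add_mul_diagonal_mulVec_le α W
    (fun i => abs_one_sub_tanh_sq_le_one (x i)) hv
  linarith
end

section
/- (Corollary 9 of the paper: k-contraction of the nonlinear opinion dynamics model, compound-free form.) Let D = diag(d₁,…,dₙ), U = diag(u₁,…,uₙ) with u₁² ≥ u₂² ≥ ⋯ ≥ uₙ², let A ∈ ℝ^{n×n}, let f : ℝ → ℝ be continuously differentiable, and let k be an integer with 1 ≤ k ≤ n. Define α_k := (1/k)·min{ d_{i₁} + ⋯ + d_{i_k} : 1 ≤ i₁ < ⋯ < i_k ≤ n }, and for x ∈ ℝⁿ, J(x) := −D + U·diag(f'((Ax)₁), …, f'((Ax)ₙ))·A, the Jacobian of the opinion dynamics ẋ_i = −d_i x_i + u_i f((Ax)_i) + b_i. Assume α_k > 0 and that for all x in a convex set Ω ⊆ ℝⁿ, (max_i |f'((Ax)_i)|)² · Σ_{i=1}^k u_i² · s_i(A) < α_k² · k. Then for every x ∈ Ω and every k-frame V ∈ ℝ^{n×k}, tr(Vᵀ(J(x) + J(x)ᵀ)V) < 0; i.e., the sum of the k largest eigenvalues of J(x)+J(x)ᵀ is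 negative, so the model is k-contractive. -/
open Matrix

/-!
Split `J = -D + M` with `M = U·diag(f'(Ax))·A` and put `L = maxᵢ |f'((Ax)ᵢ)|`. For a frame `V`,
`tr(Vᵀ(J + Jᵀ)V) = 2(tr(VᵀMV) - tr(VᵀDV))`. The squared row norms `cᵢ = ‖Vᵢ‖²` lie in `[0, 1]`
and sum to `k`, so `tr(VᵀDV) = Σ dᵢcᵢ` is at least the least sum of `k` of the `dᵢ`, i.e. `k·α_k`.
By Cauchy–Schwarz `tr(VᵀMV)² ≤ k‖MV‖²_F ≤ k·L²·Σ uᵢ²‖(AV)ᵢ‖²`, and summation by parts against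
the decreasing weights `uᵢ²` reduces the last sum to the Ky Fan bounds
`Σ_{i ∈ F} ‖(AV)ᵢ‖² ≤ s₁(A) + ⋯ + s_{min(|F|, k)}(A)` for sets `F` of rows, which follow from the
scalar Ky Fan inequality after diagonalising `AᵀA`. The gain hypothesis then gives
`tr(VᵀMV) < k·α_k ≤ tr(VᵀDV)`.
-/

open Finset

def zeroExtend {M : Type*} [Zero M] {n : ℕ} (f : Fin n → M) (i : ℕ) : M :=
  if h : i < n then f ⟨i, h⟩ else 0

section zeroExtend

variable {M : Type*} {n : ℕ}

@[simp]
lemma zeroExtend_val [Zero M] (f : Fin n → M) (i : Fin n) : zeroExtend f i = f i :=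
  dif_pos i.isLt

lemma sum_range_zeroExtend [AddCommMonoid M] (f : Fin n → M) {j : ℕ} (hj : j ≤ n) :
    ∑ i ∈ range j, zeroExtend f i = ∑ i ∈ univ.map (Fin.castLEEmb hj), f i := by
  rw [← Fin.sum_univ_eq_sum_range, sum_map]
  exact sum_congr rfl fun i _ => dif_pos (i.isLt.trans_le hj)

lemma antitone_zeroExtend [Zero M] [Preorder M] {f : Fin n → M} (hf : Antitone f) (hf0 : ∀ i, 0 ≤ f i) :
    Antitone (zeroExtend f) := by
  intro i j hij
  unfold zeroExtend
  split_ifs with hj hi hi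
  · exact hf (Fin.mk_le_mk.2 hij)
  · omega
  · exact hf0 _
  · rfl

lemma zeroExtend_nonneg [Zero M] [Preorder M] {f : Fin n → M} (hf0 : ∀ i, 0 ≤ f i) (i : ℕ) : 0 ≤ zeroExtend f i := by
  unfold zeroExtend
  split_ifs
  exacts [hf0 _, le_rfl]

end zeroExtend

lemma sum_range_ite_lt {M : Type*} [AddCommMonoid M] (s : ℕ → M) (j k : ℕ) :
    ∑ i ∈ range j, (if i < k then s i else 0) = ∑ i ∈ range (min j k), s i := by
  rw [← sum_filter]
  congr 1
  ext i
  simp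

lemma sum_range_mul_le_of_sum_range_le {N : ℕ} {w x y : ℕ → ℝ} (hw : Antitone w)
    (hw0 : ∀ i, 0 ≤ w i) (h : ∀ j ≤ N, ∑ i ∈ range j, x i ≤ ∑ i ∈ range j, y i) :
    ∑ i ∈ range N, w i * x i ≤ ∑ i ∈ range N, w i * y i := by
  have hG : ∀ j ≤ N, 0 ≤ ∑ i ∈ range j, (y - x) i := fun j hj => by
    simpa [sum_sub_distrib] using h j hj
  have hparts := sum_range_by_parts w (y - x) N
  simp only [smul_eq_mul] at hparts
  have hdiff : ∑ i ∈ range N, w i * y i - ∑ i ∈ range N, w i * x i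
      = ∑ i ∈ range N, w i * (y - x) i := by
    simp [← sum_sub_distrib, mul_sub]
  have hlast : 0 ≤ w (N - 1) * ∑ i ∈ range N, (y - x) i :=
    mul_nonneg (hw0 _) (hG N le_rfl)
  have hsteps : ∑ i ∈ range (N - 1), (w (i + 1) - w i) * ∑ j ∈ range (i + 1), (y - x) j ≤ 0 :=
    sum_nonpos fun i hi => mul_nonpos_of_nonpos_of_nonneg
      (sub_nonpos.2 (hw i.le_succ)) (hG _ (by simp at hi; omega))
  linarith

section sortedDesc

variable {n : ℕ} (f : Fin n → ℝ)

lemma sortedDesc_eq_comp : sortedDesc f = f ∘ (Fin.revPerm.trans (Tuple.sort f)) := rfl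

lemma antitone_sortedDesc : Antitone (sortedDesc f) :=
  fun _ _ hij => Tuple.monotone_sort f (Fin.rev_le_rev.2 hij)

variable {f}

/-- Scalar form of the Ky Fan maximum principle. -/
theorem sum_mul_le_sum_range_sortedDesc {k : ℕ} (hkn : k ≤ n) {c : Fin n → ℝ}
    (hf : ∀ i, 0 ≤ f i) (hc0 : ∀ i, 0 ≤ c i) (hc1 : ∀ i, c i ≤ 1) (hc : ∑ i, c i ≤ k) :
    ∑ i, f i * c i ≤ ∑ i ∈ range k, zeroExtend (sortedDesc f) i := by
  set σ := Fin.revPerm.trans (Tuple.sort f)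
  have hsorted : ∑ i, f i * c i
      = ∑ i ∈ range n, zeroExtend (sortedDesc f) i * zeroExtend (c ∘ σ) i := by
    rw [← Equiv.sum_comp σ, ← Fin.sum_univ_eq_sum_range]
    simp only [zeroExtend_val, sortedDesc_eq_comp, Function.comp_apply]
    rfl
  have htop : ∑ i ∈ range k, zeroExtend (sortedDesc f) i
      = ∑ i ∈ range n, zeroExtend (sortedDesc f) i * (if i < k then 1 else 0) := by
    simp [mul_ite, sum_range_ite_lt, min_eq_right hkn]
  rw [hsorted, htop]
  refine sum_range_mul_le_of_sum_range_le (antitone_zeroExtend (antitone_sortedDesc f)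
    fun i => hf _) (zeroExtend_nonneg fun i => hf _) fun j hj => ?_
  rw [sum_range_ite_lt, sum_range_zeroExtend _ hj]
  simp only [sum_const, card_range, nsmul_eq_mul, mul_one, Nat.cast_min]
  refine le_min ?_ ?_
  · calc ∑ i ∈ univ.map (Fin.castLEEmb hj), c (σ i) ≤ ∑ i ∈ univ.map (Fin.castLEEmb hj), 1 :=
          sum_le_sum fun i _ => hc1 _
      _ = j := by simp
  · calc ∑ i ∈ univ.map (Fin.castLEEmb hj), c (σ i) ≤ ∑ i, c (σ i) :=
          sum_le_sum_of_subset_of_nonneg (subset_univ _) fun i _ _ => hc0 _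
      _ = ∑ i, c i := Equiv.sum_comp σ c
      _ ≤ k := hc

theorem exists_card_eq_sum_mul_le {k : ℕ} (hkn : k ≤ n) {c : Fin n → ℝ}
    (hf : ∀ i, 0 ≤ f i) (hc0 : ∀ i, 0 ≤ c i) (hc1 : ∀ i, c i ≤ 1) (hc : ∑ i, c i ≤ k) :
    ∃ S : Finset (Fin n), #S = k ∧ ∑ i, f i * c i ≤ ∑ i ∈ S, f i := by
  set σ := Fin.revPerm.trans (Tuple.sort f)
  refine ⟨univ.map ((Fin.castLEEmb hkn).trans σ.toEmbedding), by simp, ?_⟩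
  calc ∑ i, f i * c i ≤ ∑ i ∈ range k, zeroExtend (sortedDesc f) i :=
        sum_mul_le_sum_range_sortedDesc hkn hf hc0 hc1 hc
    _ = _ := by
        rw [sum_range_zeroExtend _ hkn, sum_map, sum_map, sortedDesc_eq_comp]
        rfl

end sortedDesc

section Frobenius

variable {m ι : Type*} [Fintype m] [Fintype ι]

lemma trace_transpose_mul_eq_sum (X Y : Matrix m ι ℝ) :
    (Xᵀ * Y).trace = ∑ i, ∑ j, X i j * Y i j := by
  simp only [trace, diag_apply, mul_apply, transpose_apply]
  exact sum_comm

lemma trace_transpose_mul_self_eq_sum (X : Matrix m ι ℝ) :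
    (Xᵀ * X).trace = ∑ i, ∑ j, X i j ^ 2 := by
  simp [trace_transpose_mul_eq_sum, sq]

lemma trace_transpose_mul_diagonal_mul_s11 [DecidableEq m] (X : Matrix m ι ℝ) (g : m → ℝ) :
    (Xᵀ * diagonal g * X).trace = ∑ i, g i * ∑ j, X i j ^ 2 := by
  rw [Matrix.mul_assoc, trace_transpose_mul_eq_sum]
  simp only [diagonal_mul, mul_sum]
  exact sum_congr rfl fun i _ => sum_congr rfl fun j _ => by ring

lemma sq_trace_transpose_mul_le (X Y : Matrix m ι ℝ) :
    (Xᵀ * Y).trace ^ 2 ≤ (Xᵀ * X).trace * (Yᵀ * Y).trace := by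
  simp only [trace_transpose_mul_self_eq_sum, trace_transpose_mul_eq_sum, ← Fintype.sum_prod_type']
  exact sum_mul_sq_le_sq_mul_sq _ _ _

lemma trace_transpose_mul_add_transpose_mul (V : Matrix m ι ℝ) (J : Matrix m m ℝ) :
    (Vᵀ * (J + Jᵀ) * V).trace = 2 * (Vᵀ * J * V).trace := by
  have : Vᵀ * Jᵀ * V = (Vᵀ * J * V)ᵀ := by simp [Matrix.mul_assoc]
  rw [Matrix.mul_add, Matrix.add_mul, trace_add, this, trace_transpose, two_mul]

/-- Bessel's inequality for the orthogonal columns of `B`; a zero column contributes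
`0 / 0 = 0`. -/
theorem sum_sq_vecMul_div_le [DecidableEq ι] {B : Matrix m ι ℝ} {lam : ι → ℝ}
    (hB : Bᵀ * B = diagonal lam) (a : m → ℝ) :
    ∑ t, (a ᵥ* B) t ^ 2 / lam t ≤ ∑ i, a i ^ 2 := by
  set y : ι → ℝ := fun t => (a ᵥ* B) t / lam t
  set s := ∑ t, (a ᵥ* B) t ^ 2 / lam t
  have hs_dot : s = ∑ i, a i * (B *ᵥ y) i := by
    change s = a ⬝ᵥ (B *ᵥ y)
    rw [dotProduct_mulVec]
    simp [s, y, dotProduct, sq, mul_div_assoc]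
  have hs_norm : s = ∑ i, (B *ᵥ y) i ^ 2 := by
    have : ∑ i, (B *ᵥ y) i ^ 2 = (B *ᵥ y) ᵥ* B ⬝ᵥ y := by
      rw [← dotProduct_mulVec]; simp [dotProduct, sq]
    rw [this, ← mulVec_transpose, mulVec_mulVec, hB]
    refine sum_congr rfl fun t _ => ?_
    rcases eq_or_ne (lam t) 0 with h | h
    · simp [y, h]
    · simp only [mulVec_diagonal, y]
      field_simp
  have hcs := sum_mul_sq_le_sq_mul_sq univ a (B *ᵥ y)
  rw [← hs_dot, ← hs_norm] at hcs
  have hs : 0 ≤ s := hs_norm ▸ sum_nonneg fun i _ => sq_nonneg _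
  nlinarith [sum_nonneg fun i (_ : i ∈ univ) => sq_nonneg (a i)]

end Frobenius

namespace IsFrame

variable {n k : ℕ} {V : Matrix (Fin n) (Fin k) ℝ}

lemma mul {p : ℕ} {U : Matrix (Fin p) (Fin n) ℝ} (hU : IsFrame U) (hV : IsFrame V) :
    IsFrame (U * V) := by
  rw [IsFrame, transpose_mul, Matrix.mul_assoc, ← Matrix.mul_assoc Uᵀ, hU, Matrix.one_mul, hV]

lemma sum_sq_vecMul_le (hV : IsFrame V) (a : Fin n → ℝ) :
    ∑ j, (a ᵥ* V) j ^ 2 ≤ ∑ i, a i ^ 2 := by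
  simpa using sum_sq_vecMul_div_le (hV.trans diagonal_one.symm) a

lemma sum_row_sq_le_one (hV : IsFrame V) (i : Fin n) : ∑ j, V i j ^ 2 ≤ 1 := by
  simpa [single_one_vecMul, Pi.single_apply] using hV.sum_sq_vecMul_le (Pi.single i 1)

lemma sum_sum_sq (hV : IsFrame V) : ∑ i, ∑ j, V i j ^ 2 = k := by
  rw [← trace_transpose_mul_self_eq_sum, hV, trace_one, Fintype.card_fin]

lemma exists_card_eq_sum_le_trace (hkn : k ≤ n) (hV : IsFrame V) (d : Fin n → ℝ) :
    ∃ S : Finset (Fin n), #S = k ∧ ∑ i ∈ S, d i ≤ (Vᵀ * diagonal d * V).trace := by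
  set b := ∑ i, |d i|
  have hb : ∀ i, d i ≤ b := fun i =>
    (le_abs_self _).trans (single_le_sum (fun j _ => abs_nonneg (d j)) (mem_univ i))
  obtain ⟨S, hS, hle⟩ := exists_card_eq_sum_mul_le (f := fun i => b - d i) hkn
    (fun i => sub_nonneg.2 (hb i)) (fun i => sum_nonneg fun j _ => sq_nonneg (V i j))
    hV.sum_row_sq_le_one hV.sum_sum_sq.le
  refine ⟨S, hS, ?_⟩
  simp only [sub_mul, sum_sub_distrib, ← mul_sum, hV.sum_sum_sq, hS, sum_const, nsmul_eq_mul] at hle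
  rw [trace_transpose_mul_diagonal_mul_s11]
  linarith

end IsFrame

section OrthogonalColumns

variable {m : Type*} [Fintype m] {n : ℕ} {B : Matrix m (Fin n) ℝ} {lam : Fin n → ℝ}

lemma sum_col_sq_eq_of_transpose_mul_self_eq_diagonal (hB : Bᵀ * B = diagonal lam)
    (t : Fin n) : ∑ i, B i t ^ 2 = lam t := by
  simpa [mul_apply, sq] using congr_fun₂ hB t t

lemma nonneg_of_transpose_mul_self_eq_diagonal (hB : Bᵀ * B = diagonal lam) (t : Fin n) :
    0 ≤ lam t :=
  sum_col_sq_eq_of_transpose_mul_self_eq_diagonal hB t ▸ sum_nonneg fun _ _ => sq_nonneg _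

/-- Normalising the columns of `B` gives a partial isometry, whose rows have norm at most one. -/
theorem sum_sum_sq_le_of_transpose_mul_self_eq_diagonal (hB : Bᵀ * B = diagonal lam)
    (F : Finset m) (hF : #F ≤ n) :
    ∑ i ∈ F, ∑ t, B i t ^ 2 ≤ ∑ i ∈ range #F, zeroExtend (sortedDesc lam) i := by
  have hcol := sum_col_sq_eq_of_transpose_mul_self_eq_diagonal hB
  have hlam := nonneg_of_transpose_mul_self_eq_diagonal hB
  set c : Fin n → ℝ := fun t => ∑ i ∈ F, B i t ^ 2 / lam t
  have hc : ∀ t, lam t * c t = ∑ i ∈ F, B i t ^ 2 := fun t => by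
    rcases eq_or_ne (lam t) 0 with h | h
    · have hzero : ∀ i, B i t = 0 := fun i => pow_eq_zero_iff two_ne_zero |>.1 <|
        (sum_eq_zero_iff_of_nonneg fun j _ => sq_nonneg (B j t)).1 (h ▸ hcol t) i (mem_univ _)
      simp [h, hzero]
    · simp only [c, mul_sum, mul_div_cancel₀ _ h]
  have hc0 : ∀ t, 0 ≤ c t := fun t => sum_nonneg fun i _ => div_nonneg (sq_nonneg _) (hlam t)
  have hc1 : ∀ t, c t ≤ 1 := fun t => by
    simp only [c, ← sum_div]
    refine div_le_one_of_le₀ ?_ (hlam t)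
    exact hcol t ▸ sum_le_sum_of_subset_of_nonneg (subset_univ F) fun i _ _ => sq_nonneg _
  have hcsum : ∑ t, c t ≤ #F := by
    classical
    rw [sum_comm, ← nsmul_one, ← sum_const]
    refine sum_le_sum fun i _ => ?_
    simpa [single_one_vecMul, Pi.single_apply] using sum_sq_vecMul_div_le hB (Pi.single i 1)
  calc ∑ i ∈ F, ∑ t, B i t ^ 2 = ∑ t, lam t * c t := by simp only [hc]; exact sum_comm
    _ ≤ _ := sum_mul_le_sum_range_sortedDesc hF hlam hc0 hc1 hcsum

theorem sum_sum_mul_sq_le_of_transpose_mul_self_eq_diagonal (hB : Bᵀ * B = diagonal lam)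
    {k : ℕ} (hkn : k ≤ n) {W : Matrix (Fin n) (Fin k) ℝ} (hW : IsFrame W) :
    ∑ i, ∑ j, (B * W) i j ^ 2 ≤ ∑ i ∈ range k, zeroExtend (sortedDesc lam) i := by
  rw [← trace_transpose_mul_self_eq_sum, transpose_mul, Matrix.mul_assoc, ← Matrix.mul_assoc Bᵀ,
    hB, ← Matrix.mul_assoc, trace_transpose_mul_diagonal_mul_s11]
  exact sum_mul_le_sum_range_sortedDesc hkn (nonneg_of_transpose_mul_self_eq_diagonal hB)
    (fun t => sum_nonneg fun j _ => sq_nonneg _)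
    hW.sum_row_sq_le_one hW.sum_sum_sq.le

theorem sum_row_sq_mul_le_of_transpose_mul_self_eq_diagonal (hB : Bᵀ * B = diagonal lam)
    {k : ℕ} (hkn : k ≤ n) {W : Matrix (Fin n) (Fin k) ℝ} (hW : IsFrame W) (F : Finset m) :
    ∑ i ∈ F, ∑ j, (B * W) i j ^ 2 ≤ ∑ i ∈ range (min #F k), zeroExtend (sortedDesc lam) i := by
  rcases le_total #F k with hF | hF
  · rw [min_eq_left hF]
    calc ∑ i ∈ F, ∑ j, (B * W) i j ^ 2 ≤ ∑ i ∈ F, ∑ t, B i t ^ 2 :=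
          sum_le_sum fun i _ => hW.sum_sq_vecMul_le (B i)
      _ ≤ _ := sum_sum_sq_le_of_transpose_mul_self_eq_diagonal hB F (hF.trans hkn)
  · rw [min_eq_right hF]
    calc ∑ i ∈ F, ∑ j, (B * W) i j ^ 2 ≤ ∑ i, ∑ j, (B * W) i j ^ 2 :=
          sum_le_sum_of_subset_of_nonneg (subset_univ F) fun i _ _ =>
            sum_nonneg fun j _ => sq_nonneg _
      _ ≤ _ := sum_sum_mul_sq_le_of_transpose_mul_self_eq_diagonal hB hkn hW

end OrthogonalColumns

lemma sqSingVal_eq_zeroExtend {p n : ℕ} (M : Matrix (Fin p) (Fin n) ℝ)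
    (hM : (Mᵀ * M).IsHermitian) : sqSingVal M = zeroExtend (sortedDesc hM.eigenvalues) :=
  rfl

lemma exists_isFrame_transpose_and_transpose_mul_self_eq_diagonal {m : Type*} [Fintype m]
    {n : ℕ} (M : Matrix m (Fin n) ℝ) (hM : (Mᵀ * M).IsHermitian) :
    ∃ Q : Matrix (Fin n) (Fin n) ℝ, IsFrame Qᵀ ∧ (M * Q)ᵀ * (M * Q) = diagonal hM.eigenvalues := by
  set U := hM.eigenvectorUnitary
  have hstar : star (U : Matrix (Fin n) (Fin n) ℝ) = (U : Matrix (Fin n) (Fin n) ℝ)ᵀ := by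
    rw [star_eq_conjTranspose, conjTranspose_eq_transpose_of_trivial]
  refine ⟨U, ?_, ?_⟩
  · rw [IsFrame, transpose_transpose, ← hstar]
    exact Unitary.coe_mul_star_self U
  · have h := hM.conjStarAlgAut_star_eigenvectorUnitary
    rw [Unitary.conjStarAlgAut_star_apply, hstar] at h
    simpa [Matrix.mul_assoc, RCLike.ofReal_real_eq_id] using h

theorem IsFrame.sum_mul_sum_sq_le_sqSingVal {n k : ℕ} (hkn : k ≤ n) {w : Fin n → ℝ}
    (hw : Antitone w) (hw0 : ∀ i, 0 ≤ w i) (A : Matrix (Fin n) (Fin n) ℝ)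
    {V : Matrix (Fin n) (Fin k) ℝ} (hV : IsFrame V) :
    ∑ i, w i * ∑ j, (A * V) i j ^ 2 ≤ ∑ i : Fin k, w (Fin.castLE hkn i) * sqSingVal A i := by
  have hA : (Aᵀ * A).IsHermitian := by simpa using isHermitian_conjTranspose_mul_self A
  obtain ⟨Q, hQ, hdiag⟩ := exists_isFrame_transpose_and_transpose_mul_self_eq_diagonal A hA
  have hAV : A * V = A * Q * (Qᵀ * V) := by
    have hQQ : Q * Qᵀ = 1 := by simpa [IsFrame] using hQ
    rw [Matrix.mul_assoc, ← Matrix.mul_assoc Q, hQQ, Matrix.one_mul]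
  set r : Fin n → ℝ := fun i => ∑ j, (A * V) i j ^ 2
  have hlhs : ∑ i, w i * r i = ∑ i ∈ range n, zeroExtend w i * zeroExtend r i := by
    rw [← Fin.sum_univ_eq_sum_range]
    simp only [zeroExtend_val]
  have hrhs : ∑ i : Fin k, w (Fin.castLE hkn i) * sqSingVal A i
      = ∑ i ∈ range n, zeroExtend w i * (if i < k then sqSingVal A i else 0) := by
    simp only [mul_ite, mul_zero, sum_range_ite_lt, min_eq_right hkn]
    rw [← Fin.sum_univ_eq_sum_range]
    exact sum_congr rfl fun i _ => by rw [zeroExtend, dif_pos (i.isLt.trans_le hkn)]; rfl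
  rw [hlhs, hrhs]
  refine sum_range_mul_le_of_sum_range_le (antitone_zeroExtend hw hw0) (zeroExtend_nonneg hw0)
    fun j hj => ?_
  rw [sum_range_zeroExtend r hj, sum_range_ite_lt, sqSingVal_eq_zeroExtend A hA]
  have hcard : #(univ.map (Fin.castLEEmb hj)) = j := by simp
  simpa only [r, hcard, hAV] using sum_row_sq_mul_le_of_transpose_mul_self_eq_diagonal hdiag hkn
    (hQ.mul hV) (univ.map (Fin.castLEEmb hj))

theorem IsFrame.sq_trace_diagonal_mul_diagonal_mul_le {n k : ℕ} (hkn : k ≤ n) {u φ : Fin n → ℝ}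
    (hu : Antitone fun i => u i ^ 2) {L : ℝ} (hφ : ∀ i, |φ i| ≤ L) (A : Matrix (Fin n) (Fin n) ℝ)
    {V : Matrix (Fin n) (Fin k) ℝ} (hV : IsFrame V) :
    (Vᵀ * (diagonal u * diagonal φ * A) * V).trace ^ 2
      ≤ k * (L ^ 2 * ∑ i : Fin k, u (Fin.castLE hkn i) ^ 2 * sqSingVal A i) := by
  have hgain : ∀ i, (u i * φ i) ^ 2 ≤ L ^ 2 * u i ^ 2 := fun i => by
    rw [mul_pow, mul_comm, ← sq_abs (φ i)]
    exact mul_le_mul_of_nonneg_right (pow_le_pow_left₀ (abs_nonneg _) (hφ i) 2) (sq_nonneg _)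
  calc (Vᵀ * (diagonal u * diagonal φ * A) * V).trace ^ 2
      = (Vᵀ * (diagonal (fun i => u i * φ i) * (A * V))).trace ^ 2 := by
        rw [diagonal_mul_diagonal, Matrix.mul_assoc, Matrix.mul_assoc]
    _ ≤ (Vᵀ * V).trace * ((diagonal (fun i => u i * φ i) * (A * V))ᵀ
          * (diagonal (fun i => u i * φ i) * (A * V))).trace :=
        sq_trace_transpose_mul_le _ _
    _ = k * ∑ i, (u i * φ i) ^ 2 * ∑ j, (A * V) i j ^ 2 := by
        simp only [trace_transpose_mul_self_eq_sum, hV.sum_sum_sq, diagonal_mul, mul_pow,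
          ← mul_sum]
    _ ≤ k * (L ^ 2 * ∑ i, u i ^ 2 * ∑ j, (A * V) i j ^ 2) := by
        rw [mul_sum univ _ (L ^ 2)]
        refine mul_le_mul_of_nonneg_left (sum_le_sum fun i _ => ?_) k.cast_nonneg
        rw [← mul_assoc]
        exact mul_le_mul_of_nonneg_right (hgain i) (sum_nonneg fun j _ => sq_nonneg _)
    _ ≤ k * (L ^ 2 * ∑ i : Fin k, u (Fin.castLE hkn i) ^ 2 * sqSingVal A i) := by
        gcongr
        exact hV.sum_mul_sum_sq_le_sqSingVal hkn hu (fun _ => sq_nonneg _) A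

/-- **Corollary 9 of the paper: `k`-contraction of the nonlinear opinion dynamics model,
compound-free form.** Consider `ẋᵢ = −dᵢxᵢ + uᵢ f((Ax)ᵢ) + bᵢ` with `u₁² ≥ ⋯ ≥ uₙ²`,
`f` continuously differentiable, and Jacobian
`J(x) = −D + U·diag(f'((Ax)₁),…,f'((Ax)ₙ))·A`.  Let `α_k` be `1/k` times the minimal sum
of `k` of the `dᵢ`'s (expressed via `IsLeast`).  If `α_k > 0` and
`(maxᵢ|f'((Ax)ᵢ)|)² Σ_{i=1}^k uᵢ² s_i(A) < α_k²k` on the convex set `Ω`, then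
`tr(Vᵀ(J(x)+J(x)ᵀ)V) < 0` for every `x ∈ Ω` and every `k`-frame `V`, so the model is
`k`-contractive. -/
theorem opinion_dynamics_k_contraction {n : ℕ} (k : ℕ) (hk1 : 1 ≤ k) (hkn : k ≤ n)
    (d u : Fin n → ℝ) (hu : ∀ i j : Fin n, i ≤ j → u j ^ 2 ≤ u i ^ 2)
    (A : Matrix (Fin n) (Fin n) ℝ)
    (f : ℝ → ℝ)
    (Ω : Set (Fin n → ℝ))
    (αk : ℝ)
    (hαk : IsLeast {s : ℝ | ∃ I : Finset (Fin n), I.card = k ∧ ∑ i ∈ I, d i = s}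
      ((k : ℝ) * αk))
    (hα : 0 < αk)
    (hgain : ∀ x ∈ Ω,
      (Finset.univ.sup' ⟨(⟨0, by omega⟩ : Fin n), Finset.mem_univ _⟩
          fun i => |deriv f ((A *ᵥ x) i)|) ^ 2 *
        ∑ i : Fin k, u (Fin.castLE hkn i) ^ 2 * sqSingVal A i < αk ^ 2 * k) :
    ∀ x ∈ Ω, ∀ V : Matrix (Fin n) (Fin k) ℝ, IsFrame V →
      (Vᵀ * ((-(Matrix.diagonal d)
          + Matrix.diagonal u * Matrix.diagonal (fun i => deriv f ((A *ᵥ x) i)) * A)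
        + (-(Matrix.diagonal d)
          + Matrix.diagonal u * Matrix.diagonal (fun i => deriv f ((A *ᵥ x) i)) * A)ᵀ)
        * V).trace < 0 := by
  intro x hx V hV
  have hk : (0 : ℝ) < k := by exact_mod_cast hk1
  obtain ⟨S, hS, hSd⟩ := hV.exists_card_eq_sum_le_trace hkn d
  have hdissipation : k * αk ≤ (Vᵀ * diagonal d * V).trace := (hαk.2 ⟨S, hS, rfl⟩).trans hSd
  have hcoupling : (Vᵀ * (diagonal u * diagonal (fun i => deriv f ((A *ᵥ x) i)) * A) * V).trace
      < k * αk := by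
    refine lt_of_pow_lt_pow_left₀ 2 (by positivity) ?_
    calc _ ≤ _ := hV.sq_trace_diagonal_mul_diagonal_mul_le hkn (fun i j hij => hu i j hij)
            (fun i => le_sup' (fun i => |deriv f ((A *ᵥ x) i)|) (mem_univ i)) A
      _ < k * (αk ^ 2 * k) := mul_lt_mul_of_pos_left (hgain x hx) hk
      _ = (k * αk) ^ 2 := by ring
  rw [trace_transpose_mul_add_transpose_mul]
  simp only [Matrix.mul_add, Matrix.add_mul, trace_add, Matrix.mul_neg, Matrix.neg_mul, trace_neg]
  linarith
end

section
/- (Corollary 10 of the paper: 2-contraction of the 2-bus power system, compound-free form.) Let M₁, M₂, R₁, R₂, a > 0 and φ ∈ (−π/2, π/2). Assume a > max{M₁, M₂} and 3a²(1 + |cos(2φ)|) < (min{M₁,M₂}/max{M₁,M₂}) · min{R₁², R₂²}/2. For δ ∈ ℝ, let J(δ) ∈ ℝ^{3×3} be the Jacobian of the 2-bus system in the state (ω₁, ω₂, δ), namely the matrix with rows (−R₁/M₁, 0, −(a/M₁)cos(δ+φ)), (0, −R₂/M₂, (a/M₂)cos(δ−φ)), (−1, 1, 0). Then for every δ ∈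 ℝ and every 2-frame V ∈ ℝ^{3×2}, tr(Vᵀ(J(δ) + J(δ)ᵀ)V) < 0; i.e., the sum of the two largest eigenvalues of J(δ)+J(δ)ᵀ is negative, so the system is 2-contractive. -/
open Matrix

/-- A `2`-frame in `ℝ³`: a matrix `V ∈ ℝ^{3×2}` with `VᵀV = I₂`. -/
def IsFrame2 (V : Matrix (Fin 3) (Fin 2) ℝ) : Prop := Vᵀ * V = 1

lemma pos_aux (d₁ d₂ b₁ b₂ z1 z2 z3 : ℝ) (hd₁ : 0 < d₁) (hd₂ : 0 < d₂)
    (hb1 : b₁^2 < d₁*d₂) (hb2 : b₂^2 < d₁*d₂)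
    (hnz : z1^2 + z2^2 + z3^2 = 1) :
    0 < d₂*z1^2 + d₁*z2^2 + (d₁+d₂)*z3^2 + 2*b₁*z1*z3 + 2*b₂*z2*z3 := by
  by_contra hq
  push_neg at hq
  have hK : 0 < d₁*d₂*(d₁+d₂) - d₁*b₁^2 - d₂*b₂^2 := by nlinarith
  have h3 : z3^2 ≤ 0 := by
    nlinarith [mul_nonneg hd₁.le (sq_nonneg (d₂*z1 + b₁*z3)),
      mul_nonneg hd₂.le (sq_nonneg (d₁*z2 + b₂*z3)), mul_pos hd₁ hd₂, hK, sq_nonneg z3]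
  have hz3 : z3 = 0 := by
    have h0 : z3^2 = 0 := le_antisymm h3 (sq_nonneg z3)
    exact pow_eq_zero_iff (by norm_num : (2:ℕ) ≠ 0) |>.mp h0
  subst hz3
  have hz1 : z1^2 ≤ 0 := by nlinarith [mul_nonneg hd₁.le (sq_nonneg z2), hd₂]
  have hz2 : z2^2 ≤ 0 := by nlinarith [mul_nonneg hd₂.le (sq_nonneg z1), hd₁]
  nlinarith [sq_nonneg z1, sq_nonneg z2]

lemma frame_aux (d₁ d₂ b₁ b₂ u1 u2 u3 w1 w2 w3 : ℝ) (hd₁ : 0 < d₁) (hd₂ : 0 < d₂)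
    (hb1 : b₁^2 < d₁*d₂) (hb2 : b₂^2 < d₁*d₂)
    (h1 : u1*u1 + u2*u2 + u3*u3 = 1) (h2 : w1*w1 + w2*w2 + w3*w3 = 1)
    (h3 : u1*w1 + u2*w2 + u3*w3 = 0) :
    -d₁*(u1^2+w1^2) - d₂*(u2^2+w2^2) + 2*b₁*(u1*u3+w1*w3) + 2*b₂*(u2*u3+w2*w3) < 0 := by
  have hnz : (u2*w3-u3*w2)^2 + (u3*w1-u1*w3)^2 + (u1*w2-u2*w1)^2 = 1 := by
    linear_combination (w1*w1+w2*w2+w3*w3)*h1 + h2 - (u1*w1+u2*w2+u3*w3)*h3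
  have hQ := pos_aux d₁ d₂ b₁ b₂ (u2*w3-u3*w2) (u3*w1-u1*w3) (u1*w2-u2*w1)
    hd₁ hd₂ hb1 hb2 hnz
  have key : -d₁*(u1^2+w1^2) - d₂*(u2^2+w2^2) + 2*b₁*(u1*u3+w1*w3) + 2*b₂*(u2*u3+w2*w3)
      = -(d₂*(u2*w3-u3*w2)^2 + d₁*(u3*w1-u1*w3)^2 + (d₁+d₂)*(u1*w2-u2*w1)^2
        + 2*b₁*(u2*w3-u3*w2)*(u1*w2-u2*w1) + 2*b₂*(u3*w1-u1*w3)*(u1*w2-u2*w1)) := by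
    linear_combination
      (d₂*((w1*w1+w2*w2+w3*w3) - w1^2) + d₁*((w1*w1+w2*w2+w3*w3) - w2^2)
        + (d₁+d₂)*((w1*w1+w2*w2+w3*w3) - w3^2) - 2*(d₁+d₂)*((w1*w1+w2*w2+w3*w3) - 1)
        - 2*b₁*w1*w3 - 2*b₂*w2*w3 - (d₁+d₂)) * h1
      + (d₂*((u1*u1+u2*u2+u3*u3) - u1^2) + d₁*((u1*u1+u2*u2+u3*u3) - u2^2)
        + (d₁+d₂)*((u1*u1+u2*u2+u3*u3) - u3^2)
        - 2*b₁*u1*u3 - 2*b₂*u2*u3 - (d₁+d₂)) * h2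
      + (2*(d₂*u1*w1 + d₁*u2*w2 + (d₁+d₂)*u3*w3) - 2*(d₁+d₂)*(u1*w1+u2*w2+u3*w3)
        + 2*b₁*(u1*w3+u3*w1) + 2*b₂*(u2*w3+u3*w2)) * h3
  rw [key]
  linarith [hQ]

set_option maxHeartbeats 2000000 in
/-- **Corollary 10 of the paper: 2-contraction of the 2-bus power system, compound-free
form.**  If `a > max{M₁,M₂}` and
`3a²(1+|cos 2φ|) < (min{M₁,M₂}/max{M₁,M₂})·min{R₁²,R₂²}/2`, then for every `δ` the
Jacobian `J(δ)` of the 2-bus system satisfies `tr(Vᵀ(J(δ)+J(δ)ᵀ)V) < 0` for every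
2-frame `V`, i.e. the sum of the two largest eigenvalues of `J(δ)+J(δ)ᵀ` is negative,
so the system is 2-contractive. -/
theorem power_system_two_contraction (M₁ M₂ R₁ R₂ a φ : ℝ)
    (hM₁ : 0 < M₁) (hM₂ : 0 < M₂) (hR₁ : 0 < R₁) (hR₂ : 0 < R₂) (ha : 0 < a)
    (hφ : φ ∈ Set.Ioo (-(Real.pi / 2)) (Real.pi / 2))
    (haM : max M₁ M₂ < a)
    (hcond : 3 * a ^ 2 * (1 + |Real.cos (2 * φ)|) <
      (min M₁ M₂ / max M₁ M₂) * (min (R₁ ^ 2) (R₂ ^ 2) / 2)) :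
    ∀ δ : ℝ, ∀ V : Matrix (Fin 3) (Fin 2) ℝ, IsFrame2 V →
      (Vᵀ * (((!![-R₁ / M₁, 0, -(a / M₁) * Real.cos (δ + φ);
            0, -R₂ / M₂, (a / M₂) * Real.cos (δ - φ);
            -1, 1, 0] : Matrix (Fin 3) (Fin 3) ℝ)
          + (!![-R₁ / M₁, 0, -(a / M₁) * Real.cos (δ + φ);
            0, -R₂ / M₂, (a / M₂) * Real.cos (δ - φ);
            -1, 1, 0] : Matrix (Fin 3) (Fin 3) ℝ)ᵀ)) * V).trace < 0 := by
  intro δ V hV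
  -- scalar preliminaries
  have hmin : 0 < min M₁ M₂ := lt_min hM₁ hM₂
  have hmax : 0 < max M₁ M₂ := lt_of_lt_of_le hM₁ (le_max_left _ _)
  have hM1a : M₁ < a := lt_of_le_of_lt (le_max_left M₁ M₂) haM
  have hM2a : M₂ < a := lt_of_le_of_lt (le_max_right M₁ M₂) haM
  have hrr : min (R₁^2) (R₂^2) ≤ R₁*R₂ := by
    rcases le_total R₁ R₂ with h | h
    · have := min_le_left (R₁^2) (R₂^2); nlinarith
    · have := min_le_right (R₁^2) (R₂^2); nlinarith
  have hcond' : 3*a^2 < (min M₁ M₂ / max M₁ M₂) * (R₁*R₂/2) := by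
    have h0 : 0 ≤ |Real.cos (2*φ)| := abs_nonneg _
    have ha1 : 3*a^2 ≤ 3*a^2*(1+|Real.cos (2*φ)|) := by nlinarith [sq_nonneg a]
    have hle : (min M₁ M₂ / max M₁ M₂) * (min (R₁^2) (R₂^2)/2)
        ≤ (min M₁ M₂/max M₁ M₂)*(R₁*R₂/2) := by
      apply mul_le_mul_of_nonneg_left _ (le_of_lt (div_pos hmin hmax))
      linarith
    linarith
  have ha2 : a^2 * max M₁ M₂ < min M₁ M₂ * (R₁*R₂) / 6 := by
    have heq : (min M₁ M₂ / max M₁ M₂) * (R₁*R₂/2)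
        = min M₁ M₂ * (R₁*R₂/2) / max M₁ M₂ := by ring
    rw [heq] at hcond'
    have := (lt_div_iff₀ hmax).mp hcond'
    linarith
  have hRRpos : 0 < R₁*R₂ := mul_pos hR₁ hR₂
  have ha2M₂ : a^2*M₂ < R₁*R₂*M₁ := by
    have e1 : a^2*M₂ ≤ a^2*max M₁ M₂ :=
      mul_le_mul_of_nonneg_left (le_max_right M₁ M₂) (sq_nonneg a)
    have e2 : min M₁ M₂ * (R₁*R₂) ≤ M₁ * (R₁*R₂) :=
      mul_le_mul_of_nonneg_right (min_le_left M₁ M₂) hRRpos.le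
    linarith [e1, ha2, e2, mul_pos hM₁ hRRpos]
  have ha2M₁ : a^2*M₁ < R₁*R₂*M₂ := by
    have e1 : a^2*M₁ ≤ a^2*max M₁ M₂ :=
      mul_le_mul_of_nonneg_left (le_max_left M₁ M₂) (sq_nonneg a)
    have e2 : min M₁ M₂ * (R₁*R₂) ≤ M₂ * (R₁*R₂) :=
      mul_le_mul_of_nonneg_right (min_le_right M₁ M₂) hRRpos.le
    linarith [e1, ha2, e2, mul_pos hM₂ hRRpos]
  have hd₁ : 0 < 2*R₁/M₁ := by positivity
  have hd₂ : 0 < 2*R₂/M₂ := by positivity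
  set c₁ := Real.cos (δ + φ) with hc₁
  set c₂ := Real.cos (δ - φ) with hc₂
  have ht1 : 1 ≤ a/M₁ := (one_le_div hM₁).mpr hM1a.le
  have ht2 : 1 ≤ a/M₂ := (one_le_div hM₂).mpr hM2a.le
  have hcos1 : -1 ≤ c₁ := Real.neg_one_le_cos (δ + φ)
  have hcos1' : c₁ ≤ 1 := Real.cos_le_one (δ + φ)
  have hcos2 : -1 ≤ c₂ := Real.neg_one_le_cos (δ - φ)
  have hcos2' : c₂ ≤ 1 := Real.cos_le_one (δ - φ)
  have hb1 : (-(a/M₁)*c₁ - 1)^2 < (2*R₁/M₁)*(2*R₂/M₂) := by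
    have hf1 : 0 ≤ 2*(a/M₁) - (a/M₁)*c₁ - 1 := by
      have := mul_nonneg (show (0:ℝ) ≤ a/M₁ by linarith) (show (0:ℝ) ≤ 1 - c₁ by linarith)
      nlinarith
    have hf2 : 0 ≤ 2*(a/M₁) + (a/M₁)*c₁ + 1 := by
      have := mul_nonneg (show (0:ℝ) ≤ a/M₁ by linarith) (show (0:ℝ) ≤ 1 + c₁ by linarith)
      nlinarith
    have hstage1 : (-(a/M₁)*c₁ - 1)^2 ≤ (2*(a/M₁))^2 := by nlinarith [mul_nonneg hf1 hf2]
    have hstage2 : (2*(a/M₁))^2 < (2*R₁/M₁)*(2*R₂/M₂) := by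
      have e1 : (2*(a/M₁))^2 = 4*a^2/(M₁^2) := by ring
      have e2 : (2*R₁/M₁)*(2*R₂/M₂) = 4*(R₁*R₂)/(M₁*M₂) := by ring
      rw [e1, e2, div_lt_div_iff₀ (by positivity) (by positivity)]
      nlinarith [ha2M₂, hM₁]
    linarith
  have hb2 : ((a/M₂)*c₂ + 1)^2 < (2*R₁/M₁)*(2*R₂/M₂) := by
    have hf1 : 0 ≤ 2*(a/M₂) - (a/M₂)*c₂ - 1 := by
      have := mul_nonneg (show (0:ℝ) ≤ a/M₂ by linarith) (show (0:ℝ) ≤ 1 - c₂ by linarith)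
      nlinarith
    have hf2 : 0 ≤ 2*(a/M₂) + (a/M₂)*c₂ + 1 := by
      have := mul_nonneg (show (0:ℝ) ≤ a/M₂ by linarith) (show (0:ℝ) ≤ 1 + c₂ by linarith)
      nlinarith
    have hstage1 : ((a/M₂)*c₂ + 1)^2 ≤ (2*(a/M₂))^2 := by nlinarith [mul_nonneg hf1 hf2]
    have hstage2 : (2*(a/M₂))^2 < (2*R₁/M₁)*(2*R₂/M₂) := by
      have e1 : (2*(a/M₂))^2 = 4*a^2/(M₂^2) := by ring
      have e2 : (2*R₁/M₁)*(2*R₂/M₂) = 4*(R₁*R₂)/(M₁*M₂) := by ring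
      rw [e1, e2, div_lt_div_iff₀ (by positivity) (by positivity)]
      nlinarith [ha2M₁, hM₂]
    linarith
  -- matrix part
  have hV' : Vᵀ * V = 1 := hV
  have h1 := congrFun (congrFun hV' 0) 0
  have h2 := congrFun (congrFun hV' 1) 1
  have h3 := congrFun (congrFun hV' 0) 1
  simp [Matrix.mul_apply, Fin.sum_univ_three, Matrix.one_apply] at h1 h2 h3
  clear hV hV'
  have hsum : ((!![-R₁ / M₁, 0, -(a / M₁) * c₁;
          0, -R₂ / M₂, (a / M₂) * c₂;
          -1, 1, 0] : Matrix (Fin 3) (Fin 3) ℝ)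
        + (!![-R₁ / M₁, 0, -(a / M₁) * c₁;
          0, -R₂ / M₂, (a / M₂) * c₂;
          -1, 1, 0] : Matrix (Fin 3) (Fin 3) ℝ)ᵀ)
      = !![-R₁ / M₁ + -R₁ / M₁, 0, -(a / M₁) * c₁ + -1;
          0, -R₂ / M₂ + -R₂ / M₂, (a / M₂) * c₂ + 1;
          -(a / M₁) * c₁ + -1, (a / M₂) * c₂ + 1, 0] := by
    ext i j
    fin_cases i <;> fin_cases j <;>
      simp [Matrix.add_apply, Matrix.transpose, Matrix.vecHead, Matrix.vecTail] <;> ring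
  rw [hsum]
  clear hsum
  simp only [Matrix.trace, Matrix.mul_apply, Fin.sum_univ_three, Fin.sum_univ_two,
    Matrix.diag, Matrix.transpose_apply, Matrix.cons_val', Matrix.cons_val_zero,
    Matrix.cons_val_one, Matrix.head_cons, Matrix.empty_val', Matrix.cons_val_fin_one,
    Matrix.head_fin_const, Matrix.cons_val_two, Matrix.tail_cons, Matrix.of_apply]
  have hmain := frame_aux (2*R₁/M₁) (2*R₂/M₂) (-(a/M₁)*c₁ - 1) ((a/M₂)*c₂ + 1)
    (V 0 0) (V 1 0) (V 2 0) (V 0 1) (V 1 1) (V 2 1) hd₁ hd₂ hb1 hb2 h1 h2 h3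
  ring_nf at hmain ⊢
  linarith [hmain]
end
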